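/- arXiv:2512.17418 — 11 statements merged into one kernel-verified Lean document; each statement's English description precedes it below -/
import Mathlib

section
/- For a, b > 0 with a ∉ {1,2} and n ≥ 2, the sum λ_n(β_{a,b}) := Σ_{j=1}^{n-1} j · Γ(a)Γ(b-1+j)/Γ(a+b-1+j) equals (Γ(a)/(2-a))·Γ(n+b)/Γ(n-2+a+b) − ((b-1)Γ(a)/(1-a))·Γ(n-1+b)/Γ(n-2+a+b) + Γ(a)Γ(b)/(Γ(a+b-2)(1-a)(2-a)), where 1/Γ(a+b-2) is interpreted as 0 when a+b ∈ {1,2}. -/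
open Real

private lemma gamma_rec {x : ℝ} (hx : 0 < x) : Real.Gamma (x + 1) = x * Real.Gamma x :=
  Real.Gamma_add_one hx.ne'

private lemma gamma_pos' {x : ℝ} (hx : 0 < x) : Real.Gamma x ≠ 0 :=
  (Real.Gamma_pos_of_pos hx).ne'

/- λ_n(β_{a,b}) closed form for a ∉ {1,2}. Note: `Real.Gamma` vanishes at
nonpositive integers, so the term `Γ(a)Γ(b)/(Γ(a+b-2)·(1-a)(2-a))` is
automatically `0` when `a + b ∈ {1, 2}` (division by zero in ℝ). -/
theorem stmt0 (a b : ℝ) (ha : 0 < a) (hb : 0 < b) (ha1 : a ≠ 1) (ha2 : a ≠ 2)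
    (n : ℕ) (hn : 2 ≤ n) :
    ∑ j ∈ Finset.Icc 1 (n - 1),
        (j : ℝ) * (Real.Gamma a * Real.Gamma (b - 1 + j) / Real.Gamma (a + b - 1 + j)) =
      Real.Gamma a / (2 - a) * (Real.Gamma (n + b) / Real.Gamma (n - 2 + a + b))
        - (b - 1) * Real.Gamma a / (1 - a) *
            (Real.Gamma (n - 1 + b) / Real.Gamma (n - 2 + a + b))
        + Real.Gamma a * Real.Gamma b / (Real.Gamma (a + b - 2) * ((1 - a) * (2 - a))) := by
  have h1a : (1 : ℝ) - a ≠ 0 := by intro h; exact ha1 (by linarith)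
  have h2a : (2 : ℝ) - a ≠ 0 := by intro h; exact ha2 (by linarith)
  have hC : Real.Gamma a * Real.Gamma b / (Real.Gamma (a + b - 2) * ((1 - a) * (2 - a))) =
      Real.Gamma a * Real.Gamma b * ((a + b - 2) * (a + b - 1)) /
        (Real.Gamma (a + b) * ((1 - a) * (2 - a))) := by
    rcases eq_or_ne (Real.Gamma (a + b - 2)) 0 with h0 | h0
    · obtain ⟨m, hm⟩ := (Real.Gamma_eq_zero_iff _).mp h0
      have hm2 : m < 2 := by
        by_contra hc
        have : (2 : ℝ) ≤ (m : ℝ) := by exact_mod_cast Nat.le_of_not_lt hc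
        linarith
      interval_cases m
      · have : a + b - 2 = 0 := by push_cast at hm; linarith
        simp [h0, this]
      · have : a + b - 1 = 0 := by push_cast at hm; linarith
        simp [h0, this]
    · have hx2 : a + b - 2 ≠ 0 := fun h => h0 (by rw [h]; exact Real.Gamma_zero)
      have hx1 : a + b - 1 ≠ 0 := by
        intro h
        exact h0 ((Real.Gamma_eq_zero_iff _).mpr ⟨1, by push_cast; linarith⟩)
      have e1 : Real.Gamma (a + b - 1) = (a + b - 2) * Real.Gamma (a + b - 2) := by
        rw [show a + b - 1 = (a + b - 2) + 1 by ring, Real.Gamma_add_one hx2]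
      have e2 : Real.Gamma (a + b) = (a + b - 1) * Real.Gamma (a + b - 1) := by
        have h := Real.Gamma_add_one hx1
        rwa [show a + b - 1 + 1 = a + b by ring] at h
      rw [e2, e1]
      field_simp
  have hGab : Real.Gamma (a + b) ≠ 0 := gamma_pos' (by linarith)
  induction n, hn using Nat.le_induction with
  | base =>
    rw [hC]
    norm_num
    have e1 : Real.Gamma (1 + b) = b * Real.Gamma b := by
      rw [add_comm, gamma_rec hb]
    have e2 : Real.Gamma (2 + b) = (1 + b) * (b * Real.Gamma b) := by
      rw [show (2 : ℝ) + b = (1 + b) + 1 by ring, gamma_rec (by linarith), e1]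
    rw [e1, e2]
    field_simp
    ring
  | succ n hn ih =>
    obtain ⟨m, rfl⟩ : ∃ m, n = m + 1 := ⟨n - 1, by omega⟩
    rw [show m + 1 + 1 - 1 = m + 1 from rfl, Finset.sum_Icc_succ_top (by omega),
      show m + 1 - 1 = m from rfl] at *
    rw [ih]
    have hm1 : (1 : ℝ) ≤ (m : ℝ) := by exact_mod_cast Nat.le_of_lt_succ hn
    have hnb : (0 : ℝ) < (m : ℝ) + b := by linarith
    have hnab : (0 : ℝ) < (m : ℝ) - 1 + a + b := by linarith
    push_cast
    have e1 : Real.Gamma ((m : ℝ) + 1 + b) = ((m : ℝ) + b) * Real.Gamma ((m : ℝ) + b) := by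
      rw [show (m : ℝ) + 1 + b = ((m : ℝ) + b) + 1 by ring, gamma_rec hnb]
    have e2 : Real.Gamma ((m : ℝ) + 1 + 1 + b)
        = ((m : ℝ) + 1 + b) * (((m : ℝ) + b) * Real.Gamma ((m : ℝ) + b)) := by
      rw [show (m : ℝ) + 1 + 1 + b = ((m : ℝ) + 1 + b) + 1 by ring, gamma_rec (by linarith), e1]
    have e3 : Real.Gamma ((m : ℝ) + 1 + 1 - 2 + a + b) = Real.Gamma ((m : ℝ) + a + b) := by
      ring_nf
    have e4 : Real.Gamma ((m : ℝ) + 1 - 2 + a + b) = Real.Gamma ((m : ℝ) - 1 + a + b) := by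
      ring_nf
    have e5 : Real.Gamma ((m : ℝ) + a + b)
        = ((m : ℝ) - 1 + a + b) * Real.Gamma ((m : ℝ) - 1 + a + b) := by
      rw [show (m : ℝ) + a + b = ((m : ℝ) - 1 + a + b) + 1 by ring, gamma_rec hnab]
    have e6 : Real.Gamma (b - 1 + ((m : ℝ) + 1)) = Real.Gamma ((m : ℝ) + b) := by ring_nf
    have e7 : Real.Gamma (a + b - 1 + ((m : ℝ) + 1))
        = ((m : ℝ) - 1 + a + b) * Real.Gamma ((m : ℝ) - 1 + a + b) := by
      rw [show a + b - 1 + ((m : ℝ) + 1) = ((m : ℝ) - 1 + a + b) + 1 by ring, gamma_rec hnab]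
    have e8 : Real.Gamma ((m : ℝ) + 1 + 1 - 1 + b) = Real.Gamma ((m : ℝ) + 1 + b) := by ring_nf
    have e9 : Real.Gamma ((m : ℝ) + 1 - 1 + b) = Real.Gamma ((m : ℝ) + b) := by ring_nf
    rw [e8, e6, e7, e3, e4, e9, e2, e1, e5]
    have hD := gamma_pos' hnab
    have hNB := gamma_pos' hnb
    field_simp
    ring
end

section
/- For b > 0 and n ≥ 2, Σ_{j=1}^{n-1} j · Γ(2)Γ(b-1+j)/Γ(b+1+j) = Σ_{j=1}^{n-1} 1/(b+j) − 1 + 1/b + (b-1)/(b+n-1). -/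
lemma gamma_ratio (b : ℝ) (hb : 0 < b) (j : ℕ) (hj : 1 ≤ j) :
    Real.Gamma 2 * Real.Gamma (b - 1 + j) / Real.Gamma (b + 1 + j)
      = 1 / ((b + j - 1) * (b + j)) := by
  have hj1 : (1 : ℝ) ≤ j := by exact_mod_cast hj
  have hx : (0 : ℝ) < b - 1 + j := by linarith
  have h1 : b + 1 + (j : ℝ) = (b - 1 + j) + 1 + 1 := by ring
  rw [h1, Real.Gamma_add_one (by positivity), Real.Gamma_add_one hx.ne',
    Real.Gamma_two]
  have hG : Real.Gamma (b - 1 + j) ≠ 0 := (Real.Gamma_pos_of_pos hx).ne'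
  have hd1 : b + (j : ℝ) - 1 ≠ 0 := by linarith
  have hd2 : b + (j : ℝ) ≠ 0 := by positivity
  have hd3 : b - 1 + (j : ℝ) ≠ 0 := hx.ne'
  field_simp
  ring

/- Closed form of the total coalescence rate of the Beta(2,b)-coalescent. -/
theorem stmt2 (b : ℝ) (hb : 0 < b) (n : ℕ) (hn : 2 ≤ n) :
    ∑ j ∈ Finset.Icc 1 (n - 1),
        (j : ℝ) * (Real.Gamma 2 * Real.Gamma (b - 1 + j) / Real.Gamma (b + 1 + j)) =
      (∑ j ∈ Finset.Icc 1 (n - 1), 1 / (b + j)) - 1 + 1 / b + (b - 1) / (b + n - 1) := by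
  induction n, hn using Nat.le_induction with
  | base =>
      simp only [show 2 - 1 = 1 from rfl, Finset.Icc_self, Finset.sum_singleton]
      rw [gamma_ratio b hb 1 le_rfl]
      push_cast
      have h1 : b + 1 - 1 = b := by ring
      rw [h1]
      have hb0 : b ≠ 0 := hb.ne'
      have hb1 : b + 1 ≠ 0 := by positivity
      field_simp
      ring_nf
      field_simp
      ring
  | succ n hn ih =>
      have hn1 : 1 ≤ n - 1 := by omega
      have hrw : n + 1 - 1 = (n - 1) + 1 := by omega
      rw [hrw, Finset.sum_Icc_succ_top (by omega), Finset.sum_Icc_succ_top (by omega), ih]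
      rw [show ((n - 1 : ℕ) + 1 : ℕ) = n from by omega]
      rw [gamma_ratio b hb n (by omega)]
      have hn2 : (2 : ℝ) ≤ n := by exact_mod_cast hn
      have h1 : b + (n : ℝ) - 1 ≠ 0 := by nlinarith
      have h2 : b + (n : ℝ) ≠ 0 := by positivity
      have hb0 : b ≠ 0 := hb.ne'
      rw [show ((n + 1 : ℕ) : ℝ) = (n : ℝ) + 1 from by push_cast; ring,
        show b + ((n : ℝ) + 1) - 1 = b + n from by ring]
      field_simp
      ring
end

section
/- For any integer n ≥ 1 and any real r, 1 − (1−r)^n = r · Σ_{k=0}^{n-1} (1−r)^k, and consequently for a ∈ (0,1), b > 0 with a+b ≠ 1, the integral φ^{β_{a,b}}(n) := ∫_0^1 (1−(1−r)^n) r^{a-2}(1−r)^{b-1} dr equals (Γ(a)/(1−a))·(Γ(n+b)/Γ(n−1+a+b) − Γ(b)/Γ(a+b−1)). -/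
open MeasureTheory intervalIntegral in
lemma myBetaOfReal (a c : ℝ) (ha : 0 < a) (hc : 0 < c) :
    Complex.betaIntegral a c = ((∫ r in (0:ℝ)..1, r ^ (a-1) * (1-r) ^ (c-1) : ℝ) : ℂ) := by
  rw [Complex.betaIntegral, ← intervalIntegral.integral_ofReal]
  apply intervalIntegral.integral_congr
  intro x hx
  rw [Set.uIcc_of_le (by norm_num : (0:ℝ) ≤ 1)] at hx
  have h0 : (0:ℝ) ≤ x := hx.1
  have h1 : (0:ℝ) ≤ 1 - x := by linarith [hx.2]
  push_cast
  rw [show (a:ℂ) - 1 = ((a - 1 : ℝ) : ℂ) by push_cast; ring,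
    show (c:ℂ) - 1 = ((c - 1 : ℝ) : ℂ) by push_cast; ring,
    show 1 - (x:ℂ) = ((1 - x : ℝ) : ℂ) by push_cast; ring,
    ← Complex.ofReal_cpow h0, ← Complex.ofReal_cpow h1]

lemma myBeta (a c : ℝ) (ha : 0 < a) (hc : 0 < c) :
    ∫ r in (0:ℝ)..1, r ^ (a-1) * (1-r) ^ (c-1) =
      Real.Gamma a * Real.Gamma c / Real.Gamma (a+c) := by
  have key := Complex.Gamma_mul_Gamma_eq_betaIntegral (s := (a:ℂ)) (t := (c:ℂ))
    (by simpa using ha) (by simpa using hc)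
  rw [myBetaOfReal a c ha hc, ← Complex.ofReal_add, Complex.Gamma_ofReal,
    Complex.Gamma_ofReal, Complex.Gamma_ofReal, ← Complex.ofReal_mul, ← Complex.ofReal_mul] at key
  have := Complex.ofReal_injective key
  have hg : Real.Gamma (a+c) ≠ 0 := (Real.Gamma_pos_of_pos (by linarith)).ne'
  field_simp
  linarith [this]

open MeasureTheory in
lemma myIntegrable (a c : ℝ) (ha : 0 < a) (hc : 0 < c) :
    IntervalIntegrable (fun r : ℝ => r ^ (a-1) * (1-r) ^ (c-1)) volume 0 1 := by
  have hF : IntervalIntegrable (fun x : ℝ => (x:ℂ) ^ ((a:ℂ)-1) * (1-(x:ℂ)) ^ ((c:ℂ)-1))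
      volume 0 1 := Complex.betaIntegral_convergent (by simpa using ha) (by simpa using hc)
  rw [intervalIntegrable_iff_integrableOn_Ioc_of_le (by norm_num)] at hF ⊢
  refine MeasureTheory.IntegrableOn.congr_fun hF.re ?_ measurableSet_Ioc
  intro x hx
  have h0 : (0:ℝ) ≤ x := hx.1.le
  have h1 : (0:ℝ) ≤ 1 - x := by linarith [hx.2]
  simp only [Function.comp]
  rw [show (a:ℂ) - 1 = ((a - 1 : ℝ) : ℂ) by push_cast; ring,
    show (c:ℂ) - 1 = ((c - 1 : ℝ) : ℂ) by push_cast; ring,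
    show 1 - (x:ℂ) = ((1 - x : ℝ) : ℂ) by push_cast; ring,
    ← Complex.ofReal_cpow h0, ← Complex.ofReal_cpow h1, ← Complex.ofReal_mul]
  simp

lemma myTelescope (a b : ℝ) (ha0 : 0 < a) (ha1 : a < 1) (hb : 0 < b) (hab : a + b ≠ 1) :
    ∀ n : ℕ, ∑ k ∈ Finset.range n, Real.Gamma (b + k) / Real.Gamma (a + b + k) =
      (Real.Gamma (n + b) / Real.Gamma (n - 1 + a + b) - Real.Gamma b / Real.Gamma (a + b - 1))
        / (1 - a) := by
  have h1a : (1:ℝ) - a ≠ 0 := by linarith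
  have hne : ∀ n : ℕ, ((n:ℝ) - 1 + a + b) ≠ 0 := by
    intro n
    rcases Nat.eq_zero_or_pos n with h | h
    · simp [h]; intro h'; apply hab; linarith
    · have : (1:ℝ) ≤ n := by exact_mod_cast h
      linarith
  have hgne : ∀ n : ℕ, Real.Gamma ((n:ℝ) - 1 + a + b) ≠ 0 := by
    intro n
    apply Real.Gamma_ne_zero
    intro m
    rcases Nat.eq_zero_or_pos m with h | h
    · simpa [h] using hne n
    · have h1 : (1:ℝ) ≤ m := by exact_mod_cast h
      have : (0:ℝ) ≤ n := n.cast_nonneg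
      intro h'; nlinarith
  intro n
  induction n with
  | zero => simp; ring_nf
  | succ n ih =>
    rw [Finset.sum_range_succ, ih]
    have e1 : ((n+1:ℕ):ℝ) + b = ((n:ℝ) + b) + 1 := by push_cast; ring
    have e2 : ((n+1:ℕ):ℝ) - 1 + a + b = ((n:ℝ) - 1 + a + b) + 1 := by push_cast; ring
    have e3 : a + b + (n:ℝ) = ((n:ℝ) - 1 + a + b) + 1 := by ring
    have h4 : ((n:ℝ) + b) ≠ 0 := by have := n.cast_nonneg (α := ℝ); linarith
    rw [e1, e2, e3, Real.Gamma_add_one h4, Real.Gamma_add_one (hne n),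
      show b + (n:ℝ) = (n:ℝ) + b by ring]
    have h1 := hgne n
    have h2 := hne n
    field_simp
    ring

theorem stmt4 (a b : ℝ) (ha0 : 0 < a) (ha1 : a < 1) (hb : 0 < b) (hab : a + b ≠ 1) :
    (∀ n : ℕ, 1 ≤ n → ∀ r : ℝ,
        1 - (1 - r) ^ n = r * ∑ k ∈ Finset.range n, (1 - r) ^ k) ∧
    (∀ n : ℕ, 1 ≤ n →
        ∫ r in (0:ℝ)..1, (1 - (1 - r) ^ n) * r ^ (a - 2) * (1 - r) ^ (b - 1) =
          Real.Gamma a / (1 - a) *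
            (Real.Gamma (n + b) / Real.Gamma (n - 1 + a + b) -
              Real.Gamma b / Real.Gamma (a + b - 1))) := by
  have part1 : ∀ n : ℕ, 1 ≤ n → ∀ r : ℝ,
      1 - (1 - r) ^ n = r * ∑ k ∈ Finset.range n, (1 - r) ^ k := by
    intro n hn r
    have h := geom_sum_mul (1 - r) n
    linear_combination h
  refine ⟨part1, ?_⟩
  intro n hn
  have hcongr : Set.EqOn (fun r : ℝ => (1 - (1 - r) ^ n) * r ^ (a - 2) * (1 - r) ^ (b - 1))
      (fun r : ℝ => ∑ k ∈ Finset.range n, r ^ (a - 1) * (1 - r) ^ (b + k - 1))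
      (Set.uIcc 0 1) := by
    intro r hr
    rw [Set.uIcc_of_le (by norm_num : (0:ℝ) ≤ 1)] at hr
    obtain ⟨h0, h1⟩ := hr
    simp only
    rcases eq_or_lt_of_le h0 with h0 | h0
    · rw [← h0]
      simp [Real.zero_rpow (show a - 2 ≠ 0 by linarith),
        Real.zero_rpow (show a - 1 ≠ 0 by linarith)]
    · rw [part1 n hn r]
      rw [Finset.mul_sum, Finset.sum_mul, Finset.sum_mul]
      apply Finset.sum_congr rfl
      intro k _
      have hr2 : r ^ (a - 1) = r * r ^ (a - 2) := by
        rw [show a - 1 = 1 + (a - 2) by ring, Real.rpow_add h0, Real.rpow_one]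
      rcases eq_or_lt_of_le h1 with h1 | h1
      · subst h1
        norm_num
        cases k with
        | zero => norm_num
        | succ m =>
          rw [Real.zero_rpow (show b + ((m+1:ℕ):ℝ) - 1 ≠ 0 by
            have := m.cast_nonneg (α := ℝ); push_cast; linarith)]
          simp
      · have hr1 : (0:ℝ) < 1 - r := by linarith
        rw [hr2, show b + (k:ℝ) - 1 = (b - 1) + k by ring, Real.rpow_add hr1,
          Real.rpow_natCast]
        ring
  rw [intervalIntegral.integral_congr hcongr,
    intervalIntegral.integral_finset_sum (fun k _ => by
      have := myIntegrable a (b + k) ha0 (by positivity)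
      exact this)]
  have step : ∀ k ∈ Finset.range n,
      (∫ r in (0:ℝ)..1, r ^ (a - 1) * (1 - r) ^ (b + (k:ℝ) - 1)) =
        Real.Gamma a * (Real.Gamma (b + k) / Real.Gamma (a + b + k)) := by
    intro k _
    have := myBeta a (b + k) ha0 (by positivity)
    rw [this, show a + (b + (k:ℝ)) = a + b + k by ring, mul_div_assoc]
  rw [Finset.sum_congr rfl step, ← Finset.mul_sum,
    myTelescope a b ha0 ha1 hb hab n]
  ring
end

section
/- Let α, β > 0 with 0 < α − β < 1. Then the function f(x) = Γ(x+α)/Γ(x+β), extended by f(−β) = 0, is continuously differentiable and strictly increasing on (−α, ∞), with f(x) → −∞ as x → −α⁺ and f(x) → ∞ as x → ∞. In particular f is a bijection from (−α, ∞) onto ℝ. -/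
open Filter Set MeasureTheory intervalIntegral
open scoped Topology

noncomputable def rBeta (a b : ℝ) : ℝ := ∫ x in (0:ℝ)..1, x ^ (a-1) * (1-x) ^ (b-1)

lemma rBeta_integrand_eq (a b : ℝ) {x : ℝ} (hx : x ∈ Set.Icc (0:ℝ) 1) :
    ((x:ℂ) ^ ((a:ℂ) - 1) * (1 - (x:ℂ)) ^ ((b:ℂ) - 1)) = ((x ^ (a-1) * (1-x) ^ (b-1) : ℝ) : ℂ) := by
  rw [show ((a:ℂ) - 1) = ((a - 1 : ℝ) : ℂ) by push_cast; ring,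
    show ((b:ℂ) - 1) = ((b - 1 : ℝ) : ℂ) by push_cast; ring,
    show (1 - (x:ℂ)) = (((1 - x : ℝ)) : ℂ) by push_cast; ring,
    ← Complex.ofReal_cpow hx.1, ← Complex.ofReal_cpow (by linarith [hx.2]), Complex.ofReal_mul]

lemma rBeta_integrable {a b : ℝ} (ha : 0 < a) (hb : 0 < b) :
    IntervalIntegrable (fun x : ℝ => x ^ (a-1) * (1-x) ^ (b-1)) volume 0 1 := by
  have h := Complex.betaIntegral_convergent (u := a) (v := b) (by simpa) (by simpa)
  rw [intervalIntegrable_iff_integrableOn_Ioc_of_le zero_le_one] at h ⊢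
  refine h.re.congr ((ae_restrict_iff' measurableSet_Ioc).2 (ae_of_all _ fun x hx => ?_))
  show RCLike.re _ = _
  rw [rBeta_integrand_eq a b ⟨hx.1.le, hx.2⟩, RCLike.re_to_complex, Complex.ofReal_re]

lemma rBeta_eq (a b : ℝ) (ha : 0 < a) (hb : 0 < b) :
    Real.Gamma a * Real.Gamma b = Real.Gamma (a + b) * rBeta a b := by
  have h := Complex.Gamma_mul_Gamma_eq_betaIntegral (s := a) (t := b) (by simpa) (by simpa)
  have hbeta : Complex.betaIntegral a b = ((rBeta a b : ℝ) : ℂ) := by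
    rw [Complex.betaIntegral, rBeta, ← intervalIntegral.integral_ofReal]
    refine intervalIntegral.integral_congr fun x hx => ?_
    rw [uIcc_of_le zero_le_one] at hx
    exact rBeta_integrand_eq a b hx
  rw [← Complex.ofReal_inj]
  push_cast [← Complex.Gamma_ofReal]
  rw [h, hbeta]

lemma rBeta_pos {a b : ℝ} (ha : 0 < a) (hb : 0 < b) : 0 < rBeta a b := by
  refine intervalIntegral_pos_of_pos_on (rBeta_integrable ha hb) (fun x hx => ?_) one_pos
  have h1 : (0:ℝ) < x := hx.1
  have h2 : (0:ℝ) < 1 - x := by linarith [hx.2]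
  positivity

lemma rBeta_strict_anti {a a' b : ℝ} (ha : 0 < a) (haa : a < a') (hb : 0 < b) :
    rBeta a' b < rBeta a b := by
  have key : 0 < rBeta a b - rBeta a' b := by
    rw [rBeta, rBeta, ← intervalIntegral.integral_sub (rBeta_integrable ha hb)
      (rBeta_integrable (ha.trans haa) hb)]
    refine intervalIntegral_pos_of_pos_on ((rBeta_integrable ha hb).sub
      (rBeta_integrable (ha.trans haa) hb)) (fun x hx => ?_) one_pos
    have h1 : (0:ℝ) < x := hx.1
    have h2 : (0:ℝ) < 1 - x := by linarith [hx.2]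
    have : x ^ (a'-1) < x ^ (a-1) :=
      Real.rpow_lt_rpow_of_exponent_gt h1 (by linarith [hx.2]) (by linarith)
    have hp : (0:ℝ) < (1-x) ^ (b-1) := Real.rpow_pos_of_pos h2 _
    nlinarith
  linarith

lemma contDiffAt_realGamma {x : ℝ} (hx : 0 < x) : ContDiffAt ℝ 1 Real.Gamma x := by
  have hopen : IsOpen {s : ℂ | 0 < s.re} := isOpen_lt continuous_const Complex.continuous_re
  have hdiff : DifferentiableOn ℂ Complex.Gamma {s : ℂ | 0 < s.re} := fun s hs =>
    (Complex.differentiableAt_Gamma s (fun m => by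
      intro h
      rw [h] at hs
      simp only [Set.mem_setOf_eq, Complex.neg_re, Complex.natCast_re] at hs
      have : (0:ℝ) ≤ m := Nat.cast_nonneg m
      linarith)).differentiableWithinAt
  have hmem : {s : ℂ | 0 < s.re} ∈ 𝓝 (x : ℂ) := hopen.mem_nhds (by simpa)
  have han : AnalyticAt ℂ Complex.Gamma (x : ℂ) := hdiff.analyticAt hmem
  have h2 : ContDiffAt ℂ 1 Complex.Gamma (x : ℂ) := han.contDiffAt.of_le le_top
  have h3 : ContDiffAt ℝ 1 Complex.Gamma (x : ℂ) := h2.restrict_scalars ℝ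
  have h4 : ContDiffAt ℝ 1 (fun y : ℝ => (Complex.Gamma (y : ℂ)).re) x :=
    (Complex.reCLM.contDiff.contDiffAt).comp _
      (h3.comp x Complex.ofRealCLM.contDiff.contDiffAt)
  refine h4.congr_of_eventuallyEq (Filter.Eventually.of_forall fun y => ?_)
  simp [Complex.Gamma_ofReal]

lemma tendsto_realGamma_zero_right : Tendsto Real.Gamma (𝓝[>] (0:ℝ)) atTop := by
  have h1 : Tendsto (fun s : ℝ => Real.Gamma (s+1)) (𝓝[>] (0:ℝ)) (𝓝 1) := by
    have hc : ContinuousAt (fun s : ℝ => Real.Gamma (s+1)) 0 := by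
      have hg : ContinuousAt Real.Gamma ((0:ℝ)+1) :=
        (contDiffAt_realGamma (show (0:ℝ) < 0+1 by norm_num)).continuousAt
      exact ContinuousAt.comp (f := fun s : ℝ => s + 1) hg (by fun_prop)
    have ht := hc.continuousWithinAt (s := Set.Ioi (0:ℝ)) |>.tendsto
    simpa [Real.Gamma_one] using ht
  have h2 : Tendsto (fun s : ℝ => s⁻¹) (𝓝[>] (0:ℝ)) atTop := tendsto_inv_nhdsGT_zero
  have h3 : Tendsto (fun s : ℝ => Real.Gamma (s+1) * s⁻¹) (𝓝[>] (0:ℝ)) atTop :=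
    h1.pos_mul_atTop one_pos h2
  refine h3.congr' ?_
  filter_upwards [self_mem_nhdsWithin] with s hs
  have hs' : (0:ℝ) < s := hs
  rw [Real.Gamma_add_one hs'.ne']
  field_simp

set_option maxHeartbeats 1000000 in
theorem stmt6 (α β : ℝ) (hα : 0 < α) (hβ : 0 < β) (h1 : 0 < α - β) (h2 : α - β < 1) :
    StrictMonoOn (fun x : ℝ => Real.Gamma (x + α) / Real.Gamma (x + β)) (Set.Ioi (-α)) ∧
    ContDiffOn ℝ 1 (fun x : ℝ => Real.Gamma (x + α) / Real.Gamma (x + β)) (Set.Ioi (-α)) ∧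
    Filter.Tendsto (fun x : ℝ => Real.Gamma (x + α) / Real.Gamma (x + β))
      (nhdsWithin (-α) (Set.Ioi (-α))) Filter.atBot ∧
    Filter.Tendsto (fun x : ℝ => Real.Gamma (x + α) / Real.Gamma (x + β))
      Filter.atTop Filter.atTop ∧
    Set.BijOn (fun x : ℝ => Real.Gamma (x + α) / Real.Gamma (x + β))
      (Set.Ioi (-α)) Set.univ := by
  set f : ℝ → ℝ := fun x => Real.Gamma (x + α) / Real.Gamma (x + β) with hf
  set F : ℝ → ℝ := fun x => (x + β) * Real.Gamma (x + α) / Real.Gamma (x + β + 1) with hF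
  set δ : ℝ := β + 1 - α with hδdef
  have hδ : 0 < δ := by simp only [hδdef]; linarith
  -- positivity of the Gammas appearing in F
  have hGα : ∀ x ∈ Set.Ioi (-α), 0 < Real.Gamma (x + α) := fun x hx =>
    Real.Gamma_pos_of_pos (by simpa using neg_lt_iff_pos_add.mp hx)
  have hGβ1 : ∀ x ∈ Set.Ioi (-α), 0 < Real.Gamma (x + β + 1) := fun x hx =>
    Real.Gamma_pos_of_pos (by simp only [Set.mem_Ioi] at hx; linarith)
  -- f = F on Ioi (-α)
  have hfF : ∀ x ∈ Set.Ioi (-α), f x = F x := by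
    intro x hx
    simp only [Set.mem_Ioi] at hx
    rcases eq_or_ne (x + β) 0 with h | h
    · simp only [hf, hF, h, zero_mul, zero_div]
      rw [Real.Gamma_zero, div_zero]
    · have hne : Real.Gamma (x + β) ≠ 0 := by
        refine Real.Gamma_ne_zero fun m => ?_
        rcases m with _ | m
        · simpa using h
        · intro hc
          have hm : (0:ℝ) ≤ (m:ℝ) := Nat.cast_nonneg m
          push_cast at hc
          linarith
      simp only [hf, hF]
      rw [Real.Gamma_add_one h, mul_div_mul_left _ _ h]
  -- formula on (-β, ∞)
  have hposf : ∀ x, -β < x → f x = Real.Gamma (α - β) / rBeta (x + β) (α - β) := by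
    intro x hx
    have hxb : 0 < x + β := by linarith
    have hkey := rBeta_eq (x + β) (α - β) hxb h1
    rw [show x + β + (α - β) = x + α by ring] at hkey
    have hB := rBeta_pos (a := x + β) (b := α - β) hxb h1
    have hGb : 0 < Real.Gamma (x + β) := Real.Gamma_pos_of_pos hxb
    simp only [hf]
    rw [div_eq_div_iff hGb.ne' hB.ne']
    linarith [hkey]
  have hfpos : ∀ x, -β < x → 0 < f x := by
    intro x hx
    rw [hposf x hx]
    exact div_pos (Real.Gamma_pos_of_pos h1) (rBeta_pos (by linarith) h1)
  -- formula on (-α, ∞) for F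
  have hnegF : ∀ x ∈ Set.Ioi (-α), F x = (x + β) * (rBeta (x + α) δ / Real.Gamma δ) := by
    intro x hx
    simp only [Set.mem_Ioi] at hx
    have hxa : 0 < x + α := by linarith
    have hkey := rBeta_eq (x + α) δ hxa hδ
    rw [show x + α + δ = x + β + 1 by rw [hδdef]; ring] at hkey
    have hB := rBeta_pos (a := x + α) (b := δ) hxa hδ
    have hGd : 0 < Real.Gamma δ := Real.Gamma_pos_of_pos hδ
    have hG1 : 0 < Real.Gamma (x + β + 1) := hGβ1 x hx
    simp only [hF]
    rw [mul_div_assoc]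
    congr 1
    rw [div_eq_div_iff hG1.ne' hGd.ne']
    linarith [hkey]
  have hfneg : ∀ x, -α < x → x ≤ -β → f x ≤ 0 := by
    intro x hx hxb
    rw [hfF x hx, hnegF x hx]
    have hB := rBeta_pos (a := x + α) (b := δ) (by linarith) hδ
    have hGd : 0 < Real.Gamma δ := Real.Gamma_pos_of_pos hδ
    have : 0 < rBeta (x + α) δ / Real.Gamma δ := div_pos hB hGd
    nlinarith
  -- strict monotonicity
  have hmono : StrictMonoOn f (Set.Ioi (-α)) := by
    intro u hu v hv huv
    simp only [Set.mem_Ioi] at hu hv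
    rcases lt_or_ge (-β) u with hub | hub
    · -- both in (-β, ∞)
      rw [hposf u hub, hposf v (hub.trans huv)]
      have hBv := rBeta_pos (a := v + β) (b := α - β) (by linarith) h1
      have hanti := rBeta_strict_anti (a := u + β) (a' := v + β) (b := α - β)
        (by linarith) (by linarith) h1
      exact div_lt_div_of_pos_left (Real.Gamma_pos_of_pos h1) hBv hanti
    · rcases le_or_gt v (-β) with hvb | hvb
      · -- both in (-α, -β]
        rw [hfF u (Set.mem_Ioi.mpr hu), hfF v (Set.mem_Ioi.mpr hv),
          hnegF u (Set.mem_Ioi.mpr hu), hnegF v (Set.mem_Ioi.mpr hv)]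
        have hGd : 0 < Real.Gamma δ := Real.Gamma_pos_of_pos hδ
        have hBu := rBeta_pos (a := u + α) (b := δ) (by linarith) hδ
        have hBv := rBeta_pos (a := v + α) (b := δ) (by linarith) hδ
        have hanti := rBeta_strict_anti (a := u + α) (a' := v + α) (b := δ)
          (by linarith) (by linarith) hδ
        have hBu' : 0 < rBeta (u + α) δ / Real.Gamma δ := div_pos hBu hGd
        have hBv' : 0 < rBeta (v + α) δ / Real.Gamma δ := div_pos hBv hGd
        have hlt : rBeta (v + α) δ / Real.Gamma δ < rBeta (u + α) δ / Real.Gamma δ :=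
          div_lt_div_of_pos_right hanti hGd
        nlinarith [mul_lt_mul_of_neg_left hlt (show u + β < 0 by linarith)]
      · -- u ≤ -β < v
        have h1' : f u ≤ 0 := hfneg u hu hub
        have h2' : 0 < f v := hfpos v hvb
        linarith
  -- C¹
  have hsmooth : ContDiffOn ℝ 1 f (Set.Ioi (-α)) := by
    have hFc : ContDiffOn ℝ 1 F (Set.Ioi (-α)) := by
      intro x hx
      simp only [Set.mem_Ioi] at hx
      have hg : ContDiffAt ℝ 1 (fun y : ℝ => Real.Gamma (y + α)) x :=
        (contDiffAt_realGamma (show (0:ℝ) < x + α by linarith)).comp (f := fun y : ℝ => y + α) x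
          (contDiffAt_id.add contDiffAt_const)
      have hnum : ContDiffAt ℝ 1 (fun y : ℝ => (y + β) * Real.Gamma (y + α)) x :=
        (contDiffAt_id.add contDiffAt_const).mul hg
      have hden : ContDiffAt ℝ 1 (fun y : ℝ => Real.Gamma (y + β + 1)) x :=
        (contDiffAt_realGamma (show (0:ℝ) < x + β + 1 by linarith)).comp (f := fun y : ℝ => y + β + 1) x
          ((contDiffAt_id.add contDiffAt_const).add contDiffAt_const)
      exact (hnum.div hden (ne_of_gt (hGβ1 x hx))).contDiffWithinAt
    exact hFc.congr hfF
  -- tendsto atBot at -α⁺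
  have hbot : Filter.Tendsto f (nhdsWithin (-α) (Set.Ioi (-α))) Filter.atBot := by
    have heq : Set.EqOn f (fun x => Real.Gamma (x + α) * ((x + β) / Real.Gamma (x + β + 1)))
        (Set.Ioi (-α)) := by
      intro x hx
      rw [hfF x hx]
      simp only [hF]
      ring
    have hmap : Tendsto (fun x : ℝ => x + α) (𝓝[>] (-α)) (𝓝[>] (0:ℝ)) := by
      apply tendsto_nhdsWithin_of_tendsto_nhds_of_eventually_within
      · have : Tendsto (fun x : ℝ => x + α) (𝓝 (-α)) (𝓝 (-α + α)) :=
          ((continuous_id.add continuous_const).tendsto _)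
        simpa using this.mono_left nhdsWithin_le_nhds
      · filter_upwards [self_mem_nhdsWithin] with x hx
        simp only [Set.mem_Ioi] at hx ⊢
        linarith
    have hΓ : Tendsto (fun x : ℝ => Real.Gamma (x + α)) (𝓝[>] (-α)) atTop :=
      tendsto_realGamma_zero_right.comp hmap
    have hd0 : (0:ℝ) < -α + β + 1 := by linarith
    have hden : ContinuousAt (fun x : ℝ => Real.Gamma (x + β + 1)) (-α) :=
      ContinuousAt.comp (f := fun x : ℝ => x + β + 1)
        (contDiffAt_realGamma hd0).continuousAt (by fun_prop)
    have hratio : Tendsto (fun x : ℝ => (x + β) / Real.Gamma (x + β + 1)) (𝓝[>] (-α))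
        (𝓝 ((-α + β) / Real.Gamma (-α + β + 1))) := by
      have : ContinuousAt (fun x : ℝ => (x + β) / Real.Gamma (x + β + 1)) (-α) :=
        ((continuous_id.add continuous_const).continuousAt).div hden
          (ne_of_gt (Real.Gamma_pos_of_pos hd0))
      exact (this.continuousWithinAt (s := Set.Ioi (-α))).tendsto
    have hC : (-α + β) / Real.Gamma (-α + β + 1) < 0 :=
      div_neg_of_neg_of_pos (by linarith) (Real.Gamma_pos_of_pos hd0)
    have := hΓ.atTop_mul_neg hC hratio
    exact Filter.Tendsto.congr' (Filter.eventuallyEq_of_mem self_mem_nhdsWithin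
      fun x hx => (heq hx).symm) this
  -- tendsto atTop
  have htop : Filter.Tendsto f Filter.atTop Filter.atTop := by
    have hlb : ∀ᶠ x in atTop, (x + β - 1) ^ (α - β) ≤ f x := by
      filter_upwards [eventually_ge_atTop (2 - β)] with x hx
      have hx1 : (0:ℝ) < x + β - 1 := by linarith
      have hx2 : (0:ℝ) < x + β := by linarith
      have hx3 : (0:ℝ) < x + α := by linarith
      have hslope := Real.convexOn_log_Gamma.slope_mono_adjacent
        (x := x + β - 1) (y := x + β) (z := x + α)
        (Set.mem_Ioi.mpr hx1) (Set.mem_Ioi.mpr hx3) (by linarith) (by linarith)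
      have hGb := Real.Gamma_pos_of_pos hx2
      have hGa := Real.Gamma_pos_of_pos hx3
      have hGb1 := Real.Gamma_pos_of_pos hx1
      have hrec : Real.Gamma (x + β) = (x + β - 1) * Real.Gamma (x + β - 1) := by
        have := Real.Gamma_add_one (ne_of_gt hx1)
        rw [show x + β - 1 + 1 = x + β by ring] at this
        exact this
      have hlog : (Real.log ∘ Real.Gamma) (x + β) - (Real.log ∘ Real.Gamma) (x + β - 1) =
          Real.log (x + β - 1) := by
        simp only [Function.comp]
        rw [hrec, Real.log_mul (ne_of_gt hx1) (ne_of_gt hGb1)]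
        ring
      have hkey : (α - β) * Real.log (x + β - 1) ≤
          (Real.log ∘ Real.Gamma) (x + α) - (Real.log ∘ Real.Gamma) (x + β) := by
        have hd1 : x + β - (x + β - 1) = 1 := by ring
        have hd2 : x + α - (x + β) = α - β := by ring
        rw [hd1, hd2, div_one] at hslope
        rw [← hlog]
        calc (α - β) * ((Real.log ∘ Real.Gamma) (x + β) - (Real.log ∘ Real.Gamma) (x + β - 1))
            ≤ (α - β) * (((Real.log ∘ Real.Gamma) (x + α) - (Real.log ∘ Real.Gamma) (x + β)) / (α - β)) := by
              exact mul_le_mul_of_nonneg_left hslope (le_of_lt h1)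
          _ = (Real.log ∘ Real.Gamma) (x + α) - (Real.log ∘ Real.Gamma) (x + β) := by
              field_simp
      have hfx : f x = Real.exp ((Real.log ∘ Real.Gamma) (x + α) - (Real.log ∘ Real.Gamma) (x + β)) := by
        simp only [hf, Function.comp]
        rw [Real.exp_sub, Real.exp_log hGa, Real.exp_log hGb]
      rw [hfx, Real.rpow_def_of_pos hx1, mul_comm]
      exact Real.exp_le_exp.mpr hkey
    have hshift : Tendsto (fun x : ℝ => x + β - 1) atTop atTop :=
      (tendsto_atTop_add_const_right atTop (β - 1) tendsto_id).congr (fun x => by simp; ring)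
    have hpow : Tendsto (fun x : ℝ => (x + β - 1) ^ (α - β)) atTop atTop :=
      (tendsto_rpow_atTop h1).comp hshift
    exact tendsto_atTop_mono' _ hlb hpow
  refine ⟨hmono, hsmooth, hbot, htop, ⟨fun x _ => Set.mem_univ _, hmono.injOn, ?_⟩⟩
  intro y _
  have hne : (𝓝[>] (-α)).NeBot := nhdsGT_neBot _
  obtain ⟨a, ha, hay⟩ : ∃ a, a ∈ Set.Ioi (-α) ∧ f a < y := by
    have h' := (hbot.eventually (Filter.eventually_lt_atBot y)).and self_mem_nhdsWithin
    obtain ⟨a, h₁, h₂⟩ := h'.exists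
    exact ⟨a, h₂, h₁⟩
  obtain ⟨b, hb, hyb⟩ : ∃ b, a < b ∧ y < f b := by
    have h' := (htop.eventually (Filter.eventually_gt_atTop y)).and (eventually_gt_atTop a)
    obtain ⟨b, h₁, h₂⟩ := h'.exists
    exact ⟨b, h₂, h₁⟩
  have haI : -α < a := ha
  have hIcc : Set.Icc a b ⊆ Set.Ioi (-α) := fun z hz => lt_of_lt_of_le haI hz.1
  have hcont : ContinuousOn f (Set.Icc a b) := (hsmooth.continuousOn).mono hIcc
  have hy : y ∈ Set.Icc (f a) (f b) := ⟨hay.le, hyb.le⟩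
  obtain ⟨x, hx, hfx⟩ := intermediate_value_Icc hb.le hcont hy
  exact ⟨x, hIcc hx, hfx⟩
end

section
/- For a ∈ (0,2) with a ≠ 1 and b > 0, the total coalescence rate of the Beta(a,b)-coalescent satisfies λ_n(β_{a,b}) ∼ (Γ(a)/(2−a)) · n^{2−a} as n → ∞. -/
open Filter Asymptotics Finset Topology

lemma prod_aux (s : ℝ) (hs : 0 < s) (k : ℕ) :
    Real.Gamma (s + k) = Real.Gamma s * ∏ j ∈ Finset.range k, (s + j) := by
  induction k with
  | zero => simp
  | succ k ih =>
      have h : s + (k + 1 : ℕ) = (s + k) + 1 := by push_cast; ring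
      rw [h, Real.Gamma_add_one (by positivity), ih, Finset.prod_range_succ]
      ring

lemma aux_tendsto_one (c q : ℝ) :
    Tendsto (fun n : ℕ => (((n : ℝ) + c) / ((n : ℝ) + c + 1)) ^ q) atTop (𝓝 1) := by
  have hd : Tendsto (fun n : ℕ => (n : ℝ) + c + 1) atTop atTop :=
    tendsto_atTop_add_const_right _ 1 (tendsto_atTop_add_const_right _ c tendsto_natCast_atTop_atTop)
  have hinv : Tendsto (fun n : ℕ => ((n : ℝ) + c + 1)⁻¹) atTop (𝓝 0) := hd.inv_tendsto_atTop
  have hinner : Tendsto (fun n : ℕ => ((n : ℝ) + c) / ((n : ℝ) + c + 1)) atTop (𝓝 1) := by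
    have h : Tendsto (fun n : ℕ => 1 - ((n : ℝ) + c + 1)⁻¹) atTop (𝓝 1) := by
      simpa using tendsto_const_nhds.sub hinv
    apply h.congr'
    filter_upwards [hd.eventually_gt_atTop 0] with n hn
    field_simp
    ring
  have hc := (Real.continuousAt_rpow_const 1 q (Or.inl one_ne_zero)).tendsto.comp hinner
  simpa [Real.one_rpow, Function.comp_def] using hc

lemma gamma_ratio_s10 (s t : ℝ) (hs : 0 < s) (ht : 0 < t) :
    Tendsto (fun n : ℕ => Real.Gamma (s + n) / Real.Gamma (t + n) / (n : ℝ) ^ (s - t))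
      atTop (𝓝 1) := by
  have key : Tendsto (fun n : ℕ =>
      Real.Gamma (s + (n + 1 : ℕ)) / Real.Gamma (t + (n + 1 : ℕ)) / (n : ℝ) ^ (s - t))
      atTop (𝓝 1) := by
    have h1 := (Real.GammaSeq_tendsto_Gamma t).div (Real.GammaSeq_tendsto_Gamma s) ((Real.Gamma_pos_of_pos hs).ne')
    have h2 := h1.const_mul (Real.Gamma s / Real.Gamma t)
    have hlim : Real.Gamma s / Real.Gamma t * (Real.Gamma t / Real.Gamma s) = 1 := by
      field_simp
    rw [hlim] at h2
    apply h2.congr'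
    filter_upwards [eventually_ge_atTop 1] with n hn
    have hn0 : (0 : ℝ) < (n : ℝ) := by exact_mod_cast hn
    have hps : ∏ j ∈ Finset.range (n + 1), (s + j) = Real.Gamma (s + (n + 1 : ℕ)) / Real.Gamma s := by
      rw [prod_aux s hs (n + 1)]
      field_simp [(Real.Gamma_pos_of_pos hs).ne']
    have hpt : ∏ j ∈ Finset.range (n + 1), (t + j) = Real.Gamma (t + (n + 1 : ℕ)) / Real.Gamma t := by
      rw [prod_aux t ht (n + 1)]
      field_simp [(Real.Gamma_pos_of_pos ht).ne']
    unfold Real.GammaSeq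
    simp only [Pi.div_apply]
    rw [hps, hpt, Real.rpow_sub hn0]
    have hGs := Real.Gamma_pos_of_pos hs
    have hGt := Real.Gamma_pos_of_pos ht
    have hGsn := Real.Gamma_pos_of_pos (show (0:ℝ) < s + ((n + 1 : ℕ):ℝ) by positivity)
    have hGtn := Real.Gamma_pos_of_pos (show (0:ℝ) < t + ((n + 1 : ℕ):ℝ) by positivity)
    have hns : (0 : ℝ) < (n : ℝ) ^ s := Real.rpow_pos_of_pos hn0 s
    have hnt : (0 : ℝ) < (n : ℝ) ^ t := Real.rpow_pos_of_pos hn0 t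
    have hfac : (0 : ℝ) < (n.factorial : ℝ) := by exact_mod_cast n.factorial_pos
    field_simp
  rw [← tendsto_add_atTop_iff_nat 1]
  have hw := aux_tendsto_one 0 (s - t)
  have h3 := key.mul hw
  rw [mul_one] at h3
  apply h3.congr'
  filter_upwards [eventually_ge_atTop 1] with n hn
  have hn0 : (0 : ℝ) < (n : ℝ) := by exact_mod_cast hn
  have h4 : (((n : ℝ) + 0) / ((n : ℝ) + 0 + 1)) ^ (s - t)
      = (n : ℝ) ^ (s - t) / ((n : ℝ) + 1) ^ (s - t) := by
    rw [add_zero, Real.div_rpow hn0.le (by positivity)]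
  rw [h4]
  have hne : (n : ℝ) ^ (s - t) ≠ 0 := (Real.rpow_pos_of_pos hn0 _).ne'
  have hne2 : ((n : ℝ) + 1) ^ (s - t) ≠ 0 := (Real.rpow_pos_of_pos (by positivity) _).ne'
  push_cast
  field_simp

lemma ratio_pow_tendsto (q : ℝ) :
    Tendsto (fun n : ℕ => ((n : ℝ) + 1) ^ q / ((n : ℝ) + 2) ^ q) atTop (𝓝 1) := by
  apply (aux_tendsto_one 1 q).congr
  intro n
  rw [Real.div_rpow (by positivity) (by positivity)]
  ring_nf

lemma sum_rpow_tendsto (p : ℝ) (hp : -1 < p) (hp0 : p ≠ 0) :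
    Tendsto (fun n : ℕ => (∑ i ∈ Finset.range n, (i : ℝ) ^ p) * (p + 1) / (n : ℝ) ^ (p + 1))
      atTop (𝓝 1) := by
  have hp1 : 0 < p + 1 := by linarith
  rw [← tendsto_add_atTop_iff_nat 2]
  have hgoal : ∀ n : ℕ, ((n + 2 : ℕ) : ℝ) = (n : ℝ) + 2 := fun n => by push_cast; ring
  simp only [hgoal]
  set D : ℕ → ℝ := fun n => ((n : ℝ) + 2) ^ (p + 1) with hD
  have hDpos : ∀ n : ℕ, 0 < D n := fun n => Real.rpow_pos_of_pos (by positivity) _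
  set S : ℕ → ℝ := fun n => ∑ i ∈ Finset.range (n + 2), (i : ℝ) ^ p with hSdef
  show Tendsto (fun n : ℕ => S n * (p + 1) / D n) atTop (𝓝 1)
  have hsplit : ∀ n : ℕ, S n = (∑ i ∈ Finset.range n, ((i : ℝ) + 2) ^ p) + 1 := by
    intro n
    induction n with
    | zero =>
        simp [hSdef, Finset.sum_range_succ, Real.zero_rpow hp0, Real.one_rpow]
    | succ n ih =>
        have : S (n + 1) = S n + (((n + 2 : ℕ)) : ℝ) ^ p := by
          simp only [hSdef]
          rw [show n + 1 + 2 = (n + 2) + 1 by ring, Finset.sum_range_succ]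
        rw [this, ih, Finset.sum_range_succ]
        push_cast
        ring
  rcases lt_or_gt_of_ne hp0 with hpneg | hppos
  · -- p < 0 : antitone case
    have hub : ∀ n : ℕ, S n ≤ 1 + (((n : ℝ) + 1) ^ (p + 1) - 1) / (p + 1) := by
      intro n
      have hant : AntitoneOn (fun x : ℝ => x ^ p) (Set.Icc (1 : ℝ) (1 + (n : ℕ))) :=
        fun x hx y _ hxy => Real.rpow_le_rpow_of_nonpos (by linarith [hx.1]) hxy hpneg.le
      have h1 := hant.sum_le_integral
      have hint : (∫ x in (1 : ℝ)..(1 + (n : ℕ)), x ^ p)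
          = (((n : ℝ) + 1) ^ (p + 1) - 1) / (p + 1) := by
        rw [integral_rpow (Or.inl hp), Real.one_rpow]
        push_cast
        ring
      rw [hint] at h1
      have h2 : (∑ i ∈ Finset.range n, ((1 : ℝ) + ((i + 1 : ℕ) : ℝ)) ^ p)
          = ∑ i ∈ Finset.range n, ((i : ℝ) + 2) ^ p := by
        apply Finset.sum_congr rfl
        intro i _
        push_cast
        ring_nf
      rw [h2] at h1
      rw [hsplit n]
      linarith
    have hlb : ∀ n : ℕ, (((n : ℝ) + 2) ^ (p + 1) - 1) / (p + 1) ≤ S n := by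
      intro n
      have hant : AntitoneOn (fun x : ℝ => x ^ p) (Set.Icc (1 : ℝ) (1 + ((n + 1 : ℕ)))) :=
        fun x hx y _ hxy => Real.rpow_le_rpow_of_nonpos (by linarith [hx.1]) hxy hpneg.le
      have h1 := hant.integral_le_sum
      have hint : (∫ x in (1 : ℝ)..(1 + ((n + 1 : ℕ) : ℝ)), x ^ p)
          = (((n : ℝ) + 2) ^ (p + 1) - 1) / (p + 1) := by
        rw [integral_rpow (Or.inl hp), Real.one_rpow]
        push_cast
        ring
      rw [hint] at h1
      have h2 : (∑ i ∈ Finset.range (n + 1), ((1 : ℝ) + (i : ℕ)) ^ p) = S n := by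
        rw [Finset.sum_range_succ', hsplit n]
        simp only [Nat.cast_zero, add_zero, Real.one_rpow]
        congr 1
        apply Finset.sum_congr rfl
        intro i _
        push_cast
        ring_nf
      rw [h2] at h1
      exact h1
    have hL : Tendsto (fun n : ℕ => (D n - 1) / D n) atTop (𝓝 1) := by
      have hDtop : Tendsto D atTop atTop :=
        (tendsto_rpow_atTop hp1).comp
          (tendsto_atTop_add_const_right _ 2 tendsto_natCast_atTop_atTop)
      have h := tendsto_const_nhds.sub hDtop.inv_tendsto_atTop (f := fun _ : ℕ => (1 : ℝ))
      rw [sub_zero] at h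
      apply h.congr
      intro n
      rw [Pi.inv_apply, sub_div, div_self (hDpos n).ne', one_div]
    have hU : Tendsto (fun n : ℕ => ((p + 1) + (((n : ℝ) + 1) ^ (p + 1) - 1)) / D n)
        atTop (𝓝 1) := by
      have hDtop : Tendsto D atTop atTop :=
        (tendsto_rpow_atTop hp1).comp
          (tendsto_atTop_add_const_right _ 2 tendsto_natCast_atTop_atTop)
      have h1 : Tendsto (fun n : ℕ => p * (D n)⁻¹) atTop (𝓝 0) := by
        simpa using hDtop.inv_tendsto_atTop.const_mul p
      have h2 := ratio_pow_tendsto (p + 1)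
      have h3 := h1.add h2
      rw [zero_add] at h3
      apply h3.congr
      intro n
      rw [hD]
      field_simp
      ring
    refine tendsto_of_tendsto_of_tendsto_of_le_of_le hL hU ?_ ?_
    · intro n
      refine (div_le_div_iff_of_pos_right (hDpos n)).2 ?_
      exact (div_le_iff₀ hp1).1 (hlb n)
    · intro n
      refine (div_le_div_iff_of_pos_right (hDpos n)).2 ?_
      have h := mul_le_mul_of_nonneg_right (hub n) hp1.le
      have e : (1 + (((n : ℝ) + 1) ^ (p + 1) - 1) / (p + 1)) * (p + 1)
          = p + 1 + (((n : ℝ) + 1) ^ (p + 1) - 1) := by field_simp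
      exact h.trans_eq e
  · -- 0 < p : monotone case
    have hub : ∀ n : ℕ, S n ≤ D n / (p + 1) := by
      intro n
      have hmono : MonotoneOn (fun x : ℝ => x ^ p) (Set.Icc (0 : ℝ) (0 + ((n + 2 : ℕ) : ℝ))) :=
        fun x hx y _ hxy => Real.rpow_le_rpow hx.1 hxy hppos.le
      have h1 := hmono.sum_le_integral
      have hint : (∫ x in (0 : ℝ)..(0 + ((n + 2 : ℕ) : ℝ)), x ^ p) = D n / (p + 1) := by
        rw [integral_rpow (Or.inl hp), Real.zero_rpow hp1.ne', hD]
        push_cast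
        ring
      rw [hint] at h1
      refine le_trans (le_of_eq ?_) h1
      apply Finset.sum_congr rfl
      intro i _
      rw [zero_add]
    have hlb : ∀ n : ℕ, (((n : ℝ) + 1) ^ (p + 1)) / (p + 1) ≤ S n := by
      intro n
      have hmono : MonotoneOn (fun x : ℝ => x ^ p) (Set.Icc (0 : ℝ) (0 + ((n + 1 : ℕ) : ℝ))) :=
        fun x hx y _ hxy => Real.rpow_le_rpow hx.1 hxy hppos.le
      have h1 := hmono.integral_le_sum
      have hint : (∫ x in (0 : ℝ)..(0 + ((n + 1 : ℕ) : ℝ)), x ^ p)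
          = (((n : ℝ) + 1) ^ (p + 1)) / (p + 1) := by
        rw [integral_rpow (Or.inl hp), Real.zero_rpow hp1.ne']
        push_cast
        ring
      rw [hint] at h1
      have h2 : (∑ i ∈ Finset.range (n + 1), ((0 : ℝ) + ((i + 1 : ℕ) : ℝ)) ^ p) = S n := by
        rw [Finset.sum_range_succ' (fun i => ((0 : ℝ) + ((i + 1 : ℕ) : ℝ)) ^ p) n, hsplit n]
        congr 1
        · apply Finset.sum_congr rfl
          intro i _
          congr 1
          push_cast
          ring
        · norm_num [Real.one_rpow]
      exact h1.trans_eq h2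
    refine tendsto_of_tendsto_of_tendsto_of_le_of_le (ratio_pow_tendsto (p + 1))
      tendsto_const_nhds ?_ ?_
    · intro n
      refine (div_le_div_iff_of_pos_right (hDpos n)).2 ?_
      exact (div_le_iff₀ hp1).1 (hlb n)
    · intro n
      rw [div_le_one (hDpos n)]
      exact (le_div_iff₀ hp1).1 (hub n)

lemma term_tendsto (a b : ℝ) (ha0 : 0 < a) (hb : 0 < b) :
    Tendsto (fun j : ℕ =>
      ((j : ℝ) * (Real.Gamma a * Real.Gamma (b - 1 + j) / Real.Gamma (a + b - 1 + j)))
        / (Real.Gamma a * (j : ℝ) ^ (1 - a))) atTop (𝓝 1) := by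
  have hab : 0 < a + b := by linarith
  have h1 := gamma_ratio_s10 b (a + b) hb hab
  have hden : Tendsto (fun n : ℕ => b - 1 + (n : ℝ)) atTop atTop :=
    tendsto_atTop_add_const_left _ _ tendsto_natCast_atTop_atTop
  have h2 : Tendsto (fun n : ℕ => (a + b - 1 + (n : ℝ)) / (b - 1 + (n : ℝ))) atTop (𝓝 1) := by
    have h0 : Tendsto (fun n : ℕ => 1 + a * (b - 1 + (n : ℝ))⁻¹) atTop (𝓝 1) := by
      simpa using tendsto_const_nhds.add (hden.inv_tendsto_atTop.const_mul a)
    apply h0.congr'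
    filter_upwards [hden.eventually_gt_atTop 0] with n hn
    field_simp
    ring
  have h3 := h1.mul h2
  rw [mul_one] at h3
  apply h3.congr'
  filter_upwards [eventually_ge_atTop 1] with n hn
  have hn1 : (1 : ℝ) ≤ (n : ℝ) := by exact_mod_cast hn
  have hn0 : (0 : ℝ) < (n : ℝ) := by linarith
  have hb1 : (0 : ℝ) < b - 1 + n := by linarith
  have hab1 : (0 : ℝ) < a + b - 1 + n := by linarith
  have e1 : Real.Gamma (b + (n : ℝ)) = (b - 1 + n) * Real.Gamma (b - 1 + n) := by
    rw [show b + (n : ℝ) = (b - 1 + n) + 1 by ring, Real.Gamma_add_one hb1.ne']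
  have e2 : Real.Gamma (a + b + (n : ℝ)) = (a + b - 1 + n) * Real.Gamma (a + b - 1 + n) := by
    rw [show a + b + (n : ℝ) = (a + b - 1 + n) + 1 by ring, Real.Gamma_add_one hab1.ne']
  have hpow : (n : ℝ) ^ (1 - a) = n * (n : ℝ) ^ (b - (a + b)) := by
    rw [show (1 - a : ℝ) = 1 + (b - (a + b)) by ring, Real.rpow_add hn0, Real.rpow_one]
  have hΓa := Real.Gamma_pos_of_pos ha0
  have hΓ1 := Real.Gamma_pos_of_pos hb1
  have hΓ2 := Real.Gamma_pos_of_pos hab1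
  have hpw := Real.rpow_pos_of_pos hn0 (b - (a + b))
  rw [e1, e2, hpow]
  field_simp

theorem stmt10 (a b : ℝ) (ha0 : 0 < a) (ha2 : a < 2) (ha1 : a ≠ 1) (hb : 0 < b) :
    (fun n : ℕ => ∑ j ∈ Finset.Icc 1 (n - 1),
        (j : ℝ) * (Real.Gamma a * Real.Gamma (b - 1 + j) / Real.Gamma (a + b - 1 + j)))
      ~[atTop] (fun n : ℕ => Real.Gamma a / (2 - a) * (n : ℝ) ^ (2 - a)) := by
  have hΓa := Real.Gamma_pos_of_pos ha0
  have h2a : (0 : ℝ) < 2 - a := by linarith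
  set f : ℕ → ℝ := fun j =>
    (j : ℝ) * (Real.Gamma a * Real.Gamma (b - 1 + j) / Real.Gamma (a + b - 1 + j)) with hf
  set g : ℕ → ℝ := fun j => Real.Gamma a * (j : ℝ) ^ (1 - a) with hg
  have hIcc : (fun n : ℕ => ∑ j ∈ Finset.Icc 1 (n - 1), f j)
      = fun n : ℕ => ∑ j ∈ Finset.range n, f j := by
    funext n
    apply Finset.sum_subset
    · intro j hj
      simp only [Finset.mem_Icc] at hj
      simp only [Finset.mem_range]
      omega
    · intro j hj hnot
      simp only [Finset.mem_Icc] at hnot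
      simp only [Finset.mem_range] at hj
      have hj0 : j = 0 := by omega
      simp [hf, hj0]
  rw [hIcc]
  have hp : -1 < 1 - a := by linarith
  have hp0 : 1 - a ≠ 0 := fun h => ha1 (by linarith)
  -- sum of g asymptotics
  have hgsum : (fun n : ℕ => ∑ j ∈ Finset.range n, g j)
      ~[atTop] (fun n : ℕ => Real.Gamma a / (2 - a) * (n : ℝ) ^ (2 - a)) := by
    apply isEquivalent_of_tendsto_one
    · have h := sum_rpow_tendsto (1 - a) hp hp0
      rw [show (1 - a) + 1 = 2 - a by ring] at h
      apply h.congr'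
      filter_upwards [eventually_ge_atTop 1] with n hn
      have hn0 : (0 : ℝ) < (n : ℝ) := by exact_mod_cast hn
      have hpw := Real.rpow_pos_of_pos hn0 (2 - a)
      simp only [Pi.div_apply, hg]
      rw [← Finset.mul_sum]
      field_simp
  -- divergence of sum of g
  have hdiv : Tendsto (fun n : ℕ => ∑ j ∈ Finset.range n, g j) atTop atTop := by
    apply hgsum.symm.tendsto_atTop
    have hbase : Tendsto (fun n : ℕ => ((n : ℝ)) ^ (2 - a)) atTop atTop :=
      (tendsto_rpow_atTop h2a).comp tendsto_natCast_atTop_atTop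
    exact hbase.const_mul_atTop (by positivity)
  -- f ~ g
  have hfg : f ~[atTop] g := by
    apply isEquivalent_of_tendsto_one
    · exact term_tendsto a b ha0 hb
  -- sums equivalent
  have hsums : (fun n : ℕ => ∑ j ∈ Finset.range n, f j)
      ~[atTop] (fun n : ℕ => ∑ j ∈ Finset.range n, g j) := by
    have hlo := hfg.isLittleO
    have hgnn : ∀ j : ℕ, 0 ≤ g j := fun j => by
      simp only [hg]
      positivity
    have := hlo.sum_range hgnn hdiv
    have heq : (fun n : ℕ => ∑ i ∈ Finset.range n, (f - g) i)
        = fun n : ℕ => (∑ i ∈ Finset.range n, f i) - ∑ i ∈ Finset.range n, g i := by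
      funext n
      simp [Finset.sum_sub_distrib]
    rw [heq] at this
    exact this
  exact hsums.trans hgsum
end

section
/- For a > 2 and b > 0, the sequence λ_n(β_{a,b}) = Σ_{j=1}^{n-1} j · Γ(a)Γ(b−1+j)/Γ(a+b−1+j) is strictly increasing in n and converges, as n → ∞, to Γ(a)Γ(b)/(Γ(a+b−2)(a−1)(a−2)); in particular λ_n(β_{a,b}) is strictly smaller than this limit for every n ≥ 2. -/
open Real Filter Finset

/-- For `x > 0` and `p ≥ 1`, `x^p * Γ(x) ≤ Γ(x+p)`, via log-convexity of `Γ`. -/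
lemma aux_gamma_rpow_le {x p : ℝ} (hx : 0 < x) (hp : 1 ≤ p) :
    x ^ p * Real.Gamma x ≤ Real.Gamma (x + p) := by
  have hp0 : 0 < p := lt_of_lt_of_le one_pos hp
  have hΓx : 0 < Real.Gamma x := Real.Gamma_pos_of_pos hx
  have hΓx1 : 0 < Real.Gamma (x + 1) := Real.Gamma_pos_of_pos (by linarith)
  have hΓxp : 0 < Real.Gamma (x + p) := Real.Gamma_pos_of_pos (by linarith)
  have hconv := Real.convexOn_log_Gamma
  have hA : (0:ℝ) ≤ 1 - 1/p := by
    rw [sub_nonneg]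
    rw [div_le_one hp0]
    exact hp
  have hB : (0:ℝ) ≤ 1/p := by positivity
  have hAB : (1 - 1/p) + (1/p) = 1 := by ring
  have h1' := hconv.2 (Set.mem_Ioi.2 hx) (Set.mem_Ioi.2 (by linarith : (0:ℝ) < x + p)) hA hB hAB
  have heq : (1 - 1/p) • x + (1/p) • (x + p) = x + 1 := by
    simp only [smul_eq_mul]
    field_simp
    ring
  rw [heq] at h1'
  have h1 : Real.log (Real.Gamma (x + 1)) ≤
      (1 - 1/p) * Real.log (Real.Gamma x) + (1/p) * Real.log (Real.Gamma (x + p)) := by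
    simpa [Function.comp, smul_eq_mul] using h1'
  have h2 : Real.log (Real.Gamma (x + 1)) = Real.log x + Real.log (Real.Gamma x) := by
    rw [Real.Gamma_add_one hx.ne', Real.log_mul hx.ne' hΓx.ne']
  -- multiply h1 by p and simplify
  have h3 : p * Real.log x + Real.log (Real.Gamma x) ≤ Real.log (Real.Gamma (x + p)) := by
    have hmul := mul_le_mul_of_nonneg_left h1 hp0.le
    rw [h2] at hmul
    have e : p * ((1 - 1/p) * Real.log (Real.Gamma x) + 1/p * Real.log (Real.Gamma (x + p))) =
        (p - 1) * Real.log (Real.Gamma x) + Real.log (Real.Gamma (x + p)) := by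
      field_simp
    rw [e] at hmul
    nlinarith [hmul]
  calc x ^ p * Real.Gamma x
      = Real.exp (p * Real.log x + Real.log (Real.Gamma x)) := by
        rw [Real.exp_add, Real.exp_log hΓx, mul_comm p (Real.log x), ← Real.rpow_def_of_pos hx]
    _ ≤ Real.exp (Real.log (Real.Gamma (x + p))) := Real.exp_le_exp.2 h3
    _ = Real.Gamma (x + p) := Real.exp_log hΓxp

theorem stmt12 (a b : ℝ) (ha : 2 < a) (hb : 0 < b) :
    StrictMonoOn (fun n : ℕ => ∑ j ∈ Finset.Icc 1 (n - 1),
        (j : ℝ) * (Real.Gamma a * Real.Gamma (b - 1 + j) / Real.Gamma (a + b - 1 + j)))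
      (Set.Ici 1) ∧
    Filter.Tendsto (fun n : ℕ => ∑ j ∈ Finset.Icc 1 (n - 1),
        (j : ℝ) * (Real.Gamma a * Real.Gamma (b - 1 + j) / Real.Gamma (a + b - 1 + j)))
      Filter.atTop
      (nhds (Real.Gamma a * Real.Gamma b / (Real.Gamma (a + b - 2) * ((a - 1) * (a - 2))))) ∧
    ∀ n : ℕ, 2 ≤ n →
      (∑ j ∈ Finset.Icc 1 (n - 1),
        (j : ℝ) * (Real.Gamma a * Real.Gamma (b - 1 + j) / Real.Gamma (a + b - 1 + j))) <
        Real.Gamma a * Real.Gamma b / (Real.Gamma (a + b - 2) * ((a - 1) * (a - 2))) := by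
  have ha1 : (1:ℝ) < a - 1 := by linarith
  have ha2 : (0:ℝ) < a - 2 := by linarith
  have hab : (0:ℝ) < a + b - 2 := by linarith
  have hΓa : 0 < Real.Gamma a := Real.Gamma_pos_of_pos (by linarith)
  have hΓab : 0 < Real.Gamma (a + b - 2) := Real.Gamma_pos_of_pos hab
  set F : ℕ → ℝ := fun n =>
    ((a - 1) * n + (b - 1)) * Real.Gamma (b - 1 + n) /
      ((a - 1) * (a - 2) * Real.Gamma (a + b - 2 + n)) with hF
  set L : ℝ := Real.Gamma a * Real.Gamma b / (Real.Gamma (a + b - 2) * ((a - 1) * (a - 2)))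
    with hLdef
  -- positivity of the terms
  have hterm : ∀ j : ℕ, 1 ≤ j →
      0 < (j : ℝ) * (Real.Gamma a * Real.Gamma (b - 1 + j) / Real.Gamma (a + b - 1 + j)) := by
    intro j hj
    have hj1 : (1:ℝ) ≤ j := by exact_mod_cast hj
    have h1 : 0 < Real.Gamma (b - 1 + j) := Real.Gamma_pos_of_pos (by linarith)
    have h2 : 0 < Real.Gamma (a + b - 1 + j) := Real.Gamma_pos_of_pos (by linarith)
    positivity
  -- telescoping identity
  have htel : ∀ n : ℕ, 1 ≤ n →
      (n : ℝ) * (Real.Gamma a * Real.Gamma (b - 1 + n) / Real.Gamma (a + b - 1 + n)) =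
        Real.Gamma a * (F n - F (n + 1)) := by
    intro n hn
    have hn1 : (1:ℝ) ≤ n := by exact_mod_cast hn
    have hx : 0 < b - 1 + (n:ℝ) := by linarith
    have hy : 0 < a + b - 2 + (n:ℝ) := by linarith
    have hΓx : 0 < Real.Gamma (b - 1 + n) := Real.Gamma_pos_of_pos hx
    have hΓy : 0 < Real.Gamma (a + b - 2 + n) := Real.Gamma_pos_of_pos hy
    have e1 : Real.Gamma (a + b - 1 + n) = (a + b - 2 + n) * Real.Gamma (a + b - 2 + n) := by
      rw [show a + b - 1 + (n:ℝ) = (a + b - 2 + n) + 1 by ring, Real.Gamma_add_one hy.ne']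
    have e2 : Real.Gamma (b - 1 + ((n:ℝ) + 1)) = (b - 1 + n) * Real.Gamma (b - 1 + n) := by
      rw [show b - 1 + ((n:ℝ) + 1) = (b - 1 + n) + 1 by ring, Real.Gamma_add_one hx.ne']
    have e3 : Real.Gamma (a + b - 2 + ((n:ℝ) + 1)) =
        (a + b - 2 + n) * Real.Gamma (a + b - 2 + n) := by
      rw [show a + b - 2 + ((n:ℝ) + 1) = (a + b - 2 + n) + 1 by ring, Real.Gamma_add_one hy.ne']
    simp only [hF]
    push_cast
    rw [e1, e2, e3]
    have h1 : (a - 1) ≠ 0 := by linarith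
    have h2 : (a - 2) ≠ 0 := by linarith
    field_simp
    ring
  -- closed form for the partial sums
  have hsum : ∀ n : ℕ, 1 ≤ n →
      (∑ j ∈ Finset.Icc 1 (n - 1),
        (j : ℝ) * (Real.Gamma a * Real.Gamma (b - 1 + j) / Real.Gamma (a + b - 1 + j))) =
        Real.Gamma a * (F 1 - F n) := by
    intro n hn
    induction n, hn using Nat.le_induction with
    | base => simp
    | succ n hn ih =>
      have h1 : n + 1 - 1 = (n - 1) + 1 := by omega
      have h2 : n - 1 + 1 = n := by omega
      rw [h1, ← Finset.insert_Icc_right_eq_Icc_add_one (by omega), Finset.sum_insert (by simp), h2, ih,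
        htel n hn]
      ring
  -- L = Γ a * F 1
  have hLF : L = Real.Gamma a * F 1 := by
    simp only [hF, hLdef]
    push_cast
    rw [show b - 1 + (1:ℝ) = b by ring, show a + b - 2 + (1:ℝ) = (a + b - 2) + 1 by ring,
      Real.Gamma_add_one hab.ne']
    have h1 : (a - 1) ≠ 0 := by linarith
    have h2 : (a - 2) ≠ 0 := by linarith
    field_simp
    ring
  -- positivity of F
  have hFpos : ∀ n : ℕ, 1 ≤ n → 0 < F n := by
    intro n hn
    have hn1 : (1:ℝ) ≤ n := by exact_mod_cast hn
    have hx : 0 < b - 1 + (n:ℝ) := by linarith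
    have hy : 0 < a + b - 2 + (n:ℝ) := by linarith
    have hΓx : 0 < Real.Gamma (b - 1 + n) := Real.Gamma_pos_of_pos hx
    have hΓy : 0 < Real.Gamma (a + b - 2 + n) := Real.Gamma_pos_of_pos hy
    have hN : 0 < (a - 1) * (n:ℝ) + (b - 1) := by nlinarith
    simp only [hF]
    positivity
  -- F tends to 0
  have hF0 : Tendsto F atTop (nhds 0) := by
    have hbound : ∀ᶠ n : ℕ in atTop,
        F n ≤ (2 / (a - 2)) * (b - 1 + n) ^ ((2:ℝ) - a) := by
      filter_upwards [eventually_ge_atTop 2] with n hn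
      have hn2 : (2:ℝ) ≤ n := by exact_mod_cast hn
      have hx1 : (1:ℝ) < b - 1 + n := by linarith
      have hx : (0:ℝ) < b - 1 + n := by linarith
      have hΓx : 0 < Real.Gamma (b - 1 + n) := Real.Gamma_pos_of_pos hx
      have hxp : 0 < (b - 1 + (n:ℝ)) ^ (a - 1) := Real.rpow_pos_of_pos hx _
      have hkey : (b - 1 + (n:ℝ)) ^ (a - 1) * Real.Gamma (b - 1 + n) ≤
          Real.Gamma (a + b - 2 + n) := by
        have := aux_gamma_rpow_le hx ha1.le
        rwa [show b - 1 + (n:ℝ) + (a - 1) = a + b - 2 + n by ring] at this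
      have hΓy : 0 < Real.Gamma (a + b - 2 + n) := Real.Gamma_pos_of_pos (by linarith)
      have hN : 0 < (a - 1) * (n:ℝ) + (b - 1) := by nlinarith
      have step1 : F n ≤ ((a - 1) * n + (b - 1)) * Real.Gamma (b - 1 + n) /
          ((a - 1) * (a - 2) * ((b - 1 + (n:ℝ)) ^ (a - 1) * Real.Gamma (b - 1 + n))) := by
        simp only [hF]
        apply div_le_div_of_nonneg_left (by positivity) (by positivity)
        have : 0 < (a - 1) * (a - 2) := by nlinarith
        nlinarith [hkey, this]
      have step2 : ((a - 1) * (n:ℝ) + (b - 1)) * Real.Gamma (b - 1 + n) /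
          ((a - 1) * (a - 2) * ((b - 1 + (n:ℝ)) ^ (a - 1) * Real.Gamma (b - 1 + n))) =
          ((a - 1) * n + (b - 1)) / ((a - 1) * (a - 2) * (b - 1 + (n:ℝ)) ^ (a - 1)) := by
        have h1 : (a - 1) ≠ 0 := by linarith
        have h2 : (a - 2) ≠ 0 := by linarith
        field_simp
      have step3 : ((a - 1) * (n:ℝ) + (b - 1)) / ((a - 1) * (a - 2) * (b - 1 + (n:ℝ)) ^ (a - 1))
          ≤ (2 / (a - 2)) * (b - 1 + n) ^ ((2:ℝ) - a) := by
        have hrw : (b - 1 + (n:ℝ)) ^ ((2:ℝ) - a) =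
            (b - 1 + n) / (b - 1 + (n:ℝ)) ^ (a - 1) := by
          rw [show (2:ℝ) - a = 1 - (a - 1) by ring, Real.rpow_sub hx, Real.rpow_one]
        rw [hrw]
        rw [div_le_iff₀ (by positivity)]
        have hnum : (a - 1) * (n:ℝ) + (b - 1) ≤ 2 * (a - 1) * (b - 1 + n) := by nlinarith
        have : (2 / (a - 2)) * ((b - 1 + (n:ℝ)) / (b - 1 + (n:ℝ)) ^ (a - 1)) *
            ((a - 1) * (a - 2) * (b - 1 + (n:ℝ)) ^ (a - 1)) =
            2 * (a - 1) * (b - 1 + n) := by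
          field_simp
        rw [this]
        exact hnum
      linarith [step1, step2 ▸ step1, step3]
    have hlim : Tendsto (fun n : ℕ => (2 / (a - 2)) * (b - 1 + (n:ℝ)) ^ ((2:ℝ) - a))
        atTop (nhds 0) := by
      have h1 : Tendsto (fun n : ℕ => b - 1 + (n:ℝ)) atTop atTop :=
        tendsto_atTop_add_const_left _ _ tendsto_natCast_atTop_atTop
      have h2 := (tendsto_rpow_neg_atTop (by linarith : (0:ℝ) < a - 2)).comp h1
      have h3 : Tendsto (fun n : ℕ => (b - 1 + (n:ℝ)) ^ ((2:ℝ) - a)) atTop (nhds 0) := by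
        have he : (2:ℝ) - a = -(a - 2) := by ring
        rw [he]
        exact h2
      simpa using h3.const_mul (2 / (a - 2))
    refine tendsto_of_tendsto_of_tendsto_of_le_of_le' tendsto_const_nhds hlim ?_ hbound
    filter_upwards [eventually_ge_atTop 1] with n hn
    exact (hFpos n hn).le
  refine ⟨?_, ?_, ?_⟩
  · -- strict monotonicity
    intro m hm n hn hmn
    have hm' : 1 ≤ m := hm
    have hn' : 1 ≤ n := hn
    simp only
    apply Finset.sum_lt_sum_of_subset (Finset.Icc_subset_Icc_right (by omega))
      (i := m) (by simp; omega) (by simp; omega) (hterm m hm)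
    intro j hj _
    have hj1 : 1 ≤ j := (Finset.mem_Icc.1 hj).1
    exact (hterm j hj1).le
  · -- convergence
    have h : Tendsto (fun n : ℕ => Real.Gamma a * (F 1 - F n)) atTop
        (nhds (Real.Gamma a * (F 1 - 0))) :=
      (tendsto_const_nhds.sub hF0).const_mul _
    rw [sub_zero, ← hLF] at h
    apply h.congr'
    filter_upwards [eventually_ge_atTop 1] with n hn
    exact (hsum n hn).symm
  · -- strict bound
    intro n hn
    rw [hsum n (by omega), hLF]
    have := hFpos n (by omega)
    nlinarith
end

section
/- Let (E_n(ψ))_{n≥1} denote the solution of the recursion E_1(ψ)=1, E_n(ψ) = (1 + ψ(n)/λ_n)^{-1} Σ_{j=1}^{n-1} C(n,j−1)(λ_{n,n−j+1}/λ_n) E_j(ψ) with nonnegative weights summing appropriately (Σ_{j=1}^{n-1} C(n,j−1)λ_{n,n−j+1} = λ_n). If ψ_1, ψ_2 : {2,3,…} → [0,∞) satisfy ψ_1(k) ≥ ψ_2(k) for all k ≥ 2, then for all n ≥ 1: E_n(ψ_2) ≥ E_n(ψ_1) ≥ E_n(ψ_2) · Π_{k=2}^{n} (1 + (ψ_1(k)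 − ψ_2(k))/λ_k)^{-1}. -/
/- Comparison inequality for E_n(ψ) = E[exp(-∫_0^{τ_n} ψ(|Π^n_s|)ds)],
characterized by the first-jump recursion. -/
theorem stmt14 (lamnk : ℕ → ℕ → ℝ) (lam : ℕ → ℝ) (ψ₁ ψ₂ : ℕ → ℝ) (E₁ E₂ : ℕ → ℝ)
    (hpos : ∀ p k : ℕ, 2 ≤ k → k ≤ p → 0 < lamnk p k)
    (hlam : ∀ n : ℕ, lam n = ∑ k ∈ Finset.Icc 2 n, (n.choose k : ℝ) * lamnk n k)
    (hψ₁ : ∀ k : ℕ, 2 ≤ k → 0 ≤ ψ₂ k)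
    (hcomp : ∀ k : ℕ, 2 ≤ k → ψ₂ k ≤ ψ₁ k)
    (hE₁1 : E₁ 1 = 1)
    (hE₂1 : E₂ 1 = 1)
    (hE₁rec : ∀ n : ℕ, 2 ≤ n →
      E₁ n = (1 + ψ₁ n / lam n)⁻¹ *
        ∑ j ∈ Finset.Icc 1 (n - 1),
          (n.choose (j - 1) : ℝ) * (lamnk n (n - j + 1) / lam n) * E₁ j)
    (hE₂rec : ∀ n : ℕ, 2 ≤ n →
      E₂ n = (1 + ψ₂ n / lam n)⁻¹ *
        ∑ j ∈ Finset.Icc 1 (n - 1),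
          (n.choose (j - 1) : ℝ) * (lamnk n (n - j + 1) / lam n) * E₂ j) :
    ∀ n : ℕ, 1 ≤ n →
      E₁ n ≤ E₂ n ∧
      E₂ n * (∏ k ∈ Finset.Icc 2 n, (1 + (ψ₁ k - ψ₂ k) / lam k))⁻¹ ≤ E₁ n := by
  have hlampos : ∀ m : ℕ, 2 ≤ m → 0 < lam m := by
    intro m hm
    rw [hlam]
    refine Finset.sum_pos (fun k hk => ?_) ⟨2, Finset.mem_Icc.mpr ⟨le_rfl, hm⟩⟩
    rw [Finset.mem_Icc] at hk
    exact mul_pos (by exact_mod_cast Nat.choose_pos hk.2) (hpos m k hk.1 hk.2)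
  have hfac : ∀ k : ℕ, 2 ≤ k → (1:ℝ) ≤ 1 + (ψ₁ k - ψ₂ k) / lam k := fun k hk =>
    le_add_of_nonneg_right (div_nonneg (sub_nonneg.mpr (hcomp k hk)) (hlampos k hk).le)
  have honeles : ∀ s : Finset ℕ, (∀ k ∈ s, 2 ≤ k) →
      (1:ℝ) ≤ ∏ k ∈ s, (1 + (ψ₁ k - ψ₂ k) / lam k) := by
    intro s hs
    calc (1:ℝ) = ∏ _k ∈ s, 1 := by simp
      _ ≤ ∏ k ∈ s, (1 + (ψ₁ k - ψ₂ k) / lam k) :=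
        Finset.prod_le_prod (fun k _ => zero_le_one) (fun k hk => hfac k (hs k hk))
  have hPone : ∀ m : ℕ, (1:ℝ) ≤ ∏ k ∈ Finset.Icc 2 m, (1 + (ψ₁ k - ψ₂ k) / lam k) :=
    fun m => honeles _ fun k hk => (Finset.mem_Icc.mp hk).1
  have hPmono : ∀ a b : ℕ, a ≤ b →
      (∏ k ∈ Finset.Icc 2 a, (1 + (ψ₁ k - ψ₂ k) / lam k)) ≤
      ∏ k ∈ Finset.Icc 2 b, (1 + (ψ₁ k - ψ₂ k) / lam k) := by
    intro a b hab
    have hsub : Finset.Icc 2 a ⊆ Finset.Icc 2 b := Finset.Icc_subset_Icc_right hab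
    rw [← Finset.prod_sdiff hsub]
    refine le_mul_of_one_le_left (le_trans zero_le_one (hPone a)) ?_
    exact honeles _ fun k hk =>
      (Finset.mem_Icc.mp (Finset.mem_sdiff.mp hk).1).1
  suffices H : ∀ n : ℕ, 1 ≤ n → 0 ≤ E₂ n ∧ E₁ n ≤ E₂ n ∧
      E₂ n * (∏ k ∈ Finset.Icc 2 n, (1 + (ψ₁ k - ψ₂ k) / lam k))⁻¹ ≤ E₁ n by
    intro n hn
    exact ⟨(H n hn).2.1, (H n hn).2.2⟩
  intro n
  induction n using Nat.strong_induction_on with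
  | _ n ih =>
  intro hn
  rcases eq_or_lt_of_le hn with h1 | hn2
  · rw [← h1]
    rw [Finset.Icc_eq_empty (by norm_num : ¬ (2:ℕ) ≤ 1)]
    simp [hE₁1, hE₂1]
  · have hn2 : 2 ≤ n := hn2
    have hlamn := hlampos n hn2
    have hψ2n := hψ₁ n hn2
    have hψn := hcomp n hn2
    have hb : (0:ℝ) < 1 + ψ₂ n / lam n := by
      have := div_nonneg hψ2n hlamn.le; linarith
    have ha : (0:ℝ) < 1 + ψ₁ n / lam n := by
      have := div_nonneg (le_trans hψ2n hψn) hlamn.le; linarith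
    have hr1 := hE₁rec n hn2
    have hr2 := hE₂rec n hn2
    have hwpos : ∀ j ∈ Finset.Icc 1 (n-1),
        (0:ℝ) ≤ (n.choose (j - 1) : ℝ) * (lamnk n (n - j + 1) / lam n) := by
      intro j hj
      rw [Finset.mem_Icc] at hj
      have h2 : 2 ≤ n - j + 1 := by omega
      have h3 : n - j + 1 ≤ n := by omega
      exact mul_nonneg (Nat.cast_nonneg _) (div_nonneg (hpos n _ h2 h3).le hlamn.le)
    have hihj : ∀ j ∈ Finset.Icc 1 (n-1), 0 ≤ E₂ j ∧ E₁ j ≤ E₂ j ∧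
        E₂ j * (∏ k ∈ Finset.Icc 2 j, (1 + (ψ₁ k - ψ₂ k) / lam k))⁻¹ ≤ E₁ j := by
      intro j hj
      rw [Finset.mem_Icc] at hj
      exact ih j (by omega) hj.1
    set S₂ := ∑ j ∈ Finset.Icc 1 (n - 1),
        (n.choose (j - 1) : ℝ) * (lamnk n (n - j + 1) / lam n) * E₂ j with hS₂
    set S₁ := ∑ j ∈ Finset.Icc 1 (n - 1),
        (n.choose (j - 1) : ℝ) * (lamnk n (n - j + 1) / lam n) * E₁ j with hS₁
    have hS21 : S₁ ≤ S₂ :=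
      Finset.sum_le_sum fun j hj =>
        mul_le_mul_of_nonneg_left (hihj j hj).2.1 (hwpos j hj)
    have hS2nn : 0 ≤ S₂ :=
      Finset.sum_nonneg fun j hj => mul_nonneg (hwpos j hj) (hihj j hj).1
    set Q := ∏ k ∈ Finset.Icc 2 (n - 1), (1 + (ψ₁ k - ψ₂ k) / lam k) with hQ
    have hQ1 : (1:ℝ) ≤ Q := hPone (n - 1)
    have hQpos : (0:ℝ) < Q := lt_of_lt_of_le one_pos hQ1
    have hPn : (∏ k ∈ Finset.Icc 2 n, (1 + (ψ₁ k - ψ₂ k) / lam k)) =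
        Q * (1 + (ψ₁ n - ψ₂ n) / lam n) := by
      have hn' : n - 1 + 1 = n := by omega
      have := Finset.prod_Icc_succ_top (a := 2) (b := n - 1)
        (by omega : 2 ≤ n - 1 + 1) (fun k => 1 + (ψ₁ k - ψ₂ k) / lam k)
      rw [hn'] at this
      exact this
    have hSlow : Q⁻¹ * S₂ ≤ S₁ := by
      rw [hS₂, hS₁, Finset.mul_sum]
      refine Finset.sum_le_sum fun j hj => ?_
      have hPj1 : (1:ℝ) ≤ ∏ k ∈ Finset.Icc 2 j, (1 + (ψ₁ k - ψ₂ k) / lam k) := hPone j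
      have hPjQ : (∏ k ∈ Finset.Icc 2 j, (1 + (ψ₁ k - ψ₂ k) / lam k)) ≤ Q := by
        have := Finset.mem_Icc.mp hj
        exact hPmono j (n - 1) (this.2)
      have hinv : Q⁻¹ ≤ (∏ k ∈ Finset.Icc 2 j, (1 + (ψ₁ k - ψ₂ k) / lam k))⁻¹ :=
        inv_anti₀ (lt_of_lt_of_le one_pos hPj1) hPjQ
      calc Q⁻¹ * ((n.choose (j - 1) : ℝ) * (lamnk n (n - j + 1) / lam n) * E₂ j)
          = (n.choose (j - 1) : ℝ) * (lamnk n (n - j + 1) / lam n) * (E₂ j * Q⁻¹) := by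
            ring
        _ ≤ (n.choose (j - 1) : ℝ) * (lamnk n (n - j + 1) / lam n) *
            (E₂ j * (∏ k ∈ Finset.Icc 2 j, (1 + (ψ₁ k - ψ₂ k) / lam k))⁻¹) := by
            refine mul_le_mul_of_nonneg_left ?_ (hwpos j hj)
            exact mul_le_mul_of_nonneg_left hinv (hihj j hj).1
        _ ≤ (n.choose (j - 1) : ℝ) * (lamnk n (n - j + 1) / lam n) * E₁ j :=
            mul_le_mul_of_nonneg_left (hihj j hj).2.2 (hwpos j hj)
    refine ⟨?_, ?_, ?_⟩
    · rw [hr2]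
      exact mul_nonneg (inv_nonneg.mpr hb.le) hS2nn
    · rw [hr1, hr2]
      calc (1 + ψ₁ n / lam n)⁻¹ * S₁ ≤ (1 + ψ₁ n / lam n)⁻¹ * S₂ :=
            mul_le_mul_of_nonneg_left hS21 (inv_nonneg.mpr ha.le)
        _ ≤ (1 + ψ₂ n / lam n)⁻¹ * S₂ := by
            refine mul_le_mul_of_nonneg_right (inv_anti₀ hb ?_) hS2nn
            have : ψ₂ n / lam n ≤ ψ₁ n / lam n := by gcongr
            linarith
    · rw [hr1, hr2, hPn]
      have hdnn : (0:ℝ) ≤ (ψ₁ n - ψ₂ n) / lam n :=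
        div_nonneg (sub_nonneg.mpr hψn) hlamn.le
      have hdpos : (0:ℝ) < 1 + (ψ₁ n - ψ₂ n) / lam n := by linarith
      have hkey : (1 + ψ₂ n / lam n)⁻¹ * (1 + (ψ₁ n - ψ₂ n) / lam n)⁻¹ ≤
          (1 + ψ₁ n / lam n)⁻¹ := by
        rw [← mul_inv]
        refine inv_anti₀ ha ?_
        have hsum : ψ₂ n / lam n + (ψ₁ n - ψ₂ n) / lam n = ψ₁ n / lam n := by
          field_simp; ring
        nlinarith [mul_nonneg (div_nonneg hψ2n hlamn.le) hdnn]
      have hQS : 0 ≤ Q⁻¹ * S₂ := mul_nonneg (inv_nonneg.mpr hQpos.le) hS2nn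
      calc (1 + ψ₂ n / lam n)⁻¹ * S₂ * (Q * (1 + (ψ₁ n - ψ₂ n) / lam n))⁻¹
          = ((1 + ψ₂ n / lam n)⁻¹ * (1 + (ψ₁ n - ψ₂ n) / lam n)⁻¹) * (Q⁻¹ * S₂) := by
            rw [mul_inv]; ring
        _ ≤ (1 + ψ₁ n / lam n)⁻¹ * (Q⁻¹ * S₂) :=
            mul_le_mul_of_nonneg_right hkey hQS
        _ ≤ (1 + ψ₁ n / lam n)⁻¹ * S₁ :=
            mul_le_mul_of_nonneg_left hSlow (inv_nonneg.mpr ha.le)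
end

section
/- Under the same recursive framework, if ψ_1, ψ_2 : {2,3,…} → [0,∞) satisfy Σ_{n≥2} |ψ_1(n) − ψ_2(n)|/λ_n < ∞, then there exists a constant C ≥ 1 such that for all n ≥ 1: C^{-1} E_n(ψ_2) ≤ E_n(ψ_1) ≤ C E_n(ψ_2). -/
set_option maxHeartbeats 1000000 in
/- Stability of E_n(ψ) with respect to summable perturbations of ψ. -/
theorem stmt15 (lamnk : ℕ → ℕ → ℝ) (lam : ℕ → ℝ) (ψ₁ ψ₂ : ℕ → ℝ) (E₁ E₂ : ℕ → ℝ)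
    (hpos : ∀ p k : ℕ, 2 ≤ k → k ≤ p → 0 < lamnk p k)
    (hlam : ∀ n : ℕ, lam n = ∑ k ∈ Finset.Icc 2 n, (n.choose k : ℝ) * lamnk n k)
    (hψ₁ : ∀ k : ℕ, 2 ≤ k → 0 ≤ ψ₁ k)
    (hψ₂ : ∀ k : ℕ, 2 ≤ k → 0 ≤ ψ₂ k)
    (hsum : Summable (fun n : ℕ => |ψ₁ (n + 2) - ψ₂ (n + 2)| / lam (n + 2)))
    (hE₁1 : E₁ 1 = 1)
    (hE₂1 : E₂ 1 = 1)
    (hE₁rec : ∀ n : ℕ, 2 ≤ n →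
      E₁ n = (1 + ψ₁ n / lam n)⁻¹ *
        ∑ j ∈ Finset.Icc 1 (n - 1),
          (n.choose (j - 1) : ℝ) * (lamnk n (n - j + 1) / lam n) * E₁ j)
    (hE₂rec : ∀ n : ℕ, 2 ≤ n →
      E₂ n = (1 + ψ₂ n / lam n)⁻¹ *
        ∑ j ∈ Finset.Icc 1 (n - 1),
          (n.choose (j - 1) : ℝ) * (lamnk n (n - j + 1) / lam n) * E₂ j) :
    ∃ C : ℝ, 1 ≤ C ∧ ∀ n : ℕ, 1 ≤ n →
      C⁻¹ * E₂ n ≤ E₁ n ∧ E₁ n ≤ C * E₂ n := by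
  -- positivity of lam
  have hlampos : ∀ n : ℕ, 2 ≤ n → 0 < lam n := by
    intro n hn
    rw [hlam]
    apply Finset.sum_pos
    · intro k hk
      rw [Finset.mem_Icc] at hk
      have hc : 0 < (n.choose k : ℝ) := by
        exact_mod_cast Nat.choose_pos hk.2
      exact mul_pos hc (hpos n k hk.1 hk.2)
    · exact Finset.nonempty_Icc.mpr hn
  set f : ℕ → ℝ := fun k => |ψ₁ k - ψ₂ k| / lam k with hf
  have hfnn : ∀ k, 2 ≤ k → 0 ≤ f k := fun k hk =>
    div_nonneg (abs_nonneg _) (hlampos k hk).le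
  set D : ℕ → ℝ := fun k => 1 + f k with hD
  have hD1 : ∀ k, 2 ≤ k → 1 ≤ D k := by
    intro k hk
    have := hfnn k hk
    simp only [hD]
    linarith
  set P : ℕ → ℝ := fun n => ∏ k ∈ Finset.Icc 2 n, D k with hP
  have hP1 : ∀ n, 1 ≤ P n := by
    intro n
    show (1:ℝ) ≤ ∏ k ∈ Finset.Icc 2 n, D k
    calc (1:ℝ) = ∏ _k ∈ Finset.Icc 2 n, (1:ℝ) := (Finset.prod_const_one).symm
      _ ≤ ∏ k ∈ Finset.Icc 2 n, D k :=
        Finset.prod_le_prod (fun _ _ => zero_le_one)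
          (fun k hk => hD1 k (Finset.mem_Icc.mp hk).1)
  have hPpos : ∀ n, 0 < P n := fun n => lt_of_lt_of_le one_pos (hP1 n)
  have hPstep : ∀ n : ℕ, P n ≤ P (n + 1) := by
    intro n
    rcases Nat.eq_zero_or_pos n with h0 | h1
    · subst h0
      show (∏ k ∈ Finset.Icc 2 0, D k) ≤ ∏ k ∈ Finset.Icc 2 1, D k
      rw [Finset.Icc_eq_empty (by omega), Finset.Icc_eq_empty (by omega)]
    · have hsplit : P (n + 1) = P n * D (n + 1) := by
        show (∏ k ∈ Finset.Icc 2 (n + 1), D k)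
            = (∏ k ∈ Finset.Icc 2 n, D k) * D (n + 1)
        exact Finset.prod_Icc_succ_top (by omega) D
      rw [hsplit]
      exact le_mul_of_one_le_right (hPpos n).le (hD1 (n + 1) (by omega))
  have hPmono : ∀ j n : ℕ, j ≤ n → P j ≤ P n := fun j n hjn =>
    monotone_nat_of_le_succ hPstep hjn
  set T : ℝ := ∑' m : ℕ, |ψ₁ (m + 2) - ψ₂ (m + 2)| / lam (m + 2) with hT
  have hTnn : 0 ≤ T := by
    apply tsum_nonneg
    intro m
    exact hfnn (m + 2) (by omega)
  refine ⟨Real.exp T, Real.one_le_exp hTnn, ?_⟩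
  have hCpos : (0:ℝ) < Real.exp T := Real.exp_pos T
  have hPC : ∀ n, P n ≤ Real.exp T := by
    intro n
    have h1 : P n ≤ Real.exp (∑ k ∈ Finset.Icc 2 n, f k) := by
      rw [Real.exp_sum]
      apply Finset.prod_le_prod
      · intro k hk
        have := hD1 k (Finset.mem_Icc.mp hk).1
        linarith
      · intro k hk
        have := Real.add_one_le_exp (f k)
        simp only [hD]
        linarith
    have h2 : ∑ k ∈ Finset.Icc 2 n, f k ≤ T := by
      have hre : ∑ k ∈ Finset.Icc 2 n, f k
          = ∑ i ∈ Finset.range (n + 1 - 2), f (2 + i) := by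
        rw [← Finset.Ico_add_one_right_eq_Icc, Finset.sum_Ico_eq_sum_range]
      rw [hre]
      have : ∀ i, f (2 + i) = |ψ₁ (i + 2) - ψ₂ (i + 2)| / lam (i + 2) := by
        intro i; simp only [hf]; rw [Nat.add_comm 2 i]
      rw [Finset.sum_congr rfl fun i _ => this i]
      exact Summable.sum_le_tsum (Finset.range (n + 1 - 2))
        (fun i _ => hfnn (i + 2) (by omega)) hsum
    exact h1.trans (Real.exp_le_exp.mpr h2)
  -- key inductive claim
  have key : ∀ n : ℕ, 1 ≤ n →
      0 < E₁ n ∧ 0 < E₂ n ∧ E₁ n ≤ P n * E₂ n ∧ E₂ n ≤ P n * E₁ n := by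
    intro n
    induction n using Nat.strong_induction_on with
    | _ n ih =>
      intro hn
      rcases eq_or_lt_of_le hn with h1 | h2
      · -- n = 1
        have hn1 : n = 1 := h1.symm
        subst hn1
        have hP1e : P 1 = 1 := by
          simp only [hP]
          rw [Finset.Icc_eq_empty (by omega), Finset.prod_empty]
        rw [hE₁1, hE₂1, hP1e]
        norm_num
      · -- 2 ≤ n
        have h2n : 2 ≤ n := h2
        have hlampn := hlampos n h2n
        set c : ℕ → ℝ := fun j =>
          (n.choose (j - 1) : ℝ) * (lamnk n (n - j + 1) / lam n) with hc
        have hcpos : ∀ j ∈ Finset.Icc 1 (n - 1), 0 < c j := by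
          intro j hj
          rw [Finset.mem_Icc] at hj
          have h1j : 1 ≤ j := hj.1
          have hjn : j ≤ n - 1 := hj.2
          have hch : 0 < (n.choose (j - 1) : ℝ) := by
            exact_mod_cast Nat.choose_pos (by omega)
          have hlk : 0 < lamnk n (n - j + 1) := hpos n (n - j + 1) (by omega) (by omega)
          exact mul_pos hch (div_pos hlk hlampn)
        have ihj : ∀ j ∈ Finset.Icc 1 (n - 1),
            0 < E₁ j ∧ 0 < E₂ j ∧ E₁ j ≤ P j * E₂ j ∧ E₂ j ≤ P j * E₁ j := by
          intro j hj
          rw [Finset.mem_Icc] at hj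
          exact ih j (by omega) hj.1
        set S₁ : ℝ := ∑ j ∈ Finset.Icc 1 (n - 1), c j * E₁ j with hS₁
        set S₂ : ℝ := ∑ j ∈ Finset.Icc 1 (n - 1), c j * E₂ j with hS₂
        have hne : (Finset.Icc 1 (n - 1)).Nonempty := Finset.nonempty_Icc.mpr (by omega)
        have hS₁pos : 0 < S₁ :=
          Finset.sum_pos (fun j hj => mul_pos (hcpos j hj) (ihj j hj).1) hne
        have hS₂pos : 0 < S₂ :=
          Finset.sum_pos (fun j hj => mul_pos (hcpos j hj) (ihj j hj).2.1) hne
        set A₁ : ℝ := 1 + ψ₁ n / lam n with hA₁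
        set A₂ : ℝ := 1 + ψ₂ n / lam n with hA₂
        have hψ₁n := hψ₁ n h2n
        have hψ₂n := hψ₂ n h2n
        have hA₁pos : 0 < A₁ := by
          have : 0 ≤ ψ₁ n / lam n := div_nonneg hψ₁n hlampn.le
          simp only [hA₁]; linarith
        have hA₂pos : 0 < A₂ := by
          have : 0 ≤ ψ₂ n / lam n := div_nonneg hψ₂n hlampn.le
          simp only [hA₂]; linarith
        have hE₁n : E₁ n = A₁⁻¹ * S₁ := hE₁rec n h2n
        have hE₂n : E₂ n = A₂⁻¹ * S₂ := hE₂rec n h2n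
        have hE₁pos : 0 < E₁ n := by rw [hE₁n]; exact mul_pos (inv_pos.mpr hA₁pos) hS₁pos
        have hE₂pos : 0 < E₂ n := by rw [hE₂n]; exact mul_pos (inv_pos.mpr hA₂pos) hS₂pos
        -- key scalar inequalities
        have hdge1 : ψ₂ n - ψ₁ n ≤ |ψ₁ n - ψ₂ n| := by
          rw [abs_sub_comm]; exact le_abs_self _
        have hdge2 : ψ₁ n - ψ₂ n ≤ |ψ₁ n - ψ₂ n| := le_abs_self _
        have hdnn : 0 ≤ |ψ₁ n - ψ₂ n| := abs_nonneg _
        have hx : 0 < (lam n)⁻¹ := inv_pos.mpr hlampn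
        have hkey1 : A₂ ≤ D n * A₁ := by
          simp only [hA₁, hA₂, hD, hf, div_eq_mul_inv]
          nlinarith [mul_le_mul_of_nonneg_right hdge1 hx.le,
            mul_nonneg (mul_nonneg hdnn hψ₁n) (mul_nonneg hx.le hx.le)]
        have hkey2 : A₁ ≤ D n * A₂ := by
          simp only [hA₁, hA₂, hD, hf, div_eq_mul_inv]
          nlinarith [mul_le_mul_of_nonneg_right hdge2 hx.le,
            mul_nonneg (mul_nonneg hdnn hψ₂n) (mul_nonneg hx.le hx.le)]
        have hDnpos : 0 < D n := lt_of_lt_of_le one_pos (hD1 n h2n)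
        have hPsplit : P n = P (n - 1) * D n := by
          have hn' : n = (n - 1) + 1 := by omega
          simp only [hP]
          rw [hn', Finset.prod_Icc_succ_top (by omega : 2 ≤ (n - 1) + 1)]
          rw [← hn']
        -- sum comparisons
        have hS₁le : S₁ ≤ P (n - 1) * S₂ := by
          rw [hS₂, Finset.mul_sum]
          apply Finset.sum_le_sum
          intro j hj
          have hjm := Finset.mem_Icc.mp hj
          have h3 : c j * E₁ j ≤ c j * (P j * E₂ j) :=
            mul_le_mul_of_nonneg_left (ihj j hj).2.2.1 (hcpos j hj).le
          have h4 : P j ≤ P (n - 1) := hPmono j (n - 1) hjm.2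
          calc c j * E₁ j ≤ c j * (P j * E₂ j) := h3
            _ = P j * (c j * E₂ j) := by ring
            _ ≤ P (n - 1) * (c j * E₂ j) :=
                mul_le_mul_of_nonneg_right h4
                  (mul_nonneg (hcpos j hj).le (ihj j hj).2.1.le)
        have hS₂le : S₂ ≤ P (n - 1) * S₁ := by
          rw [hS₁, Finset.mul_sum]
          apply Finset.sum_le_sum
          intro j hj
          have hjm := Finset.mem_Icc.mp hj
          have h3 : c j * E₂ j ≤ c j * (P j * E₁ j) :=
            mul_le_mul_of_nonneg_left (ihj j hj).2.2.2 (hcpos j hj).le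
          have h4 : P j ≤ P (n - 1) := hPmono j (n - 1) hjm.2
          calc c j * E₂ j ≤ c j * (P j * E₁ j) := h3
            _ = P j * (c j * E₁ j) := by ring
            _ ≤ P (n - 1) * (c j * E₁ j) :=
                mul_le_mul_of_nonneg_right h4
                  (mul_nonneg (hcpos j hj).le (ihj j hj).1.le)
        have hPn1pos : 0 < P (n - 1) := hPpos (n - 1)
        refine ⟨hE₁pos, hE₂pos, ?_, ?_⟩
        · rw [hE₁n, hE₂n, hPsplit]
          have step1 : A₁⁻¹ * S₁ ≤ A₁⁻¹ * (P (n - 1) * S₂) :=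
            mul_le_mul_of_nonneg_left hS₁le (inv_pos.mpr hA₁pos).le
          refine step1.trans ?_
          rw [inv_mul_le_iff₀ hA₁pos]
          have : A₁ * (P (n - 1) * D n * (A₂⁻¹ * S₂))
              = (P (n - 1) * S₂) * ((D n * A₁) * A₂⁻¹) := by ring
          rw [this]
          have h5 : 1 ≤ (D n * A₁) * A₂⁻¹ := by
            rw [← div_eq_mul_inv, le_div_iff₀ hA₂pos, one_mul]
            exact hkey1
          exact le_mul_of_one_le_right (mul_pos hPn1pos hS₂pos).le h5
        · rw [hE₂n, hE₁n, hPsplit]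
          have step1 : A₂⁻¹ * S₂ ≤ A₂⁻¹ * (P (n - 1) * S₁) :=
            mul_le_mul_of_nonneg_left hS₂le (inv_pos.mpr hA₂pos).le
          refine step1.trans ?_
          rw [inv_mul_le_iff₀ hA₂pos]
          have : A₂ * (P (n - 1) * D n * (A₁⁻¹ * S₁))
              = (P (n - 1) * S₁) * ((D n * A₂) * A₁⁻¹) := by ring
          rw [this]
          have h5 : 1 ≤ (D n * A₂) * A₁⁻¹ := by
            rw [← div_eq_mul_inv, le_div_iff₀ hA₁pos, one_mul]
            exact hkey2
          exact le_mul_of_one_le_right (mul_pos hPn1pos hS₁pos).le h5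
  -- conclude
  intro n hn
  obtain ⟨hE₁pos, hE₂pos, h12, h21⟩ := key n hn
  constructor
  · rw [inv_mul_le_iff₀ hCpos]
    calc E₂ n ≤ P n * E₁ n := h21
      _ ≤ Real.exp T * E₁ n := mul_le_mul_of_nonneg_right (hPC n) hE₁pos.le
  · calc E₁ n ≤ P n * E₂ n := h12
      _ ≤ Real.exp T * E₂ n := mul_le_mul_of_nonneg_right (hPC n) hE₂pos.le
end

section
/- Fix a, b > 0 and ℓ ∈ (−b, ∞), and define for n ≥ 2: sgn(ℓ)·ψ_{a,b,ℓ}(n) := λ_n(β_{a,b}) − Σ_{j=1}^{n-1} C(n, j−1) λ_{n,n−j+1}(β_{a,b}) · (Γ(b+n−1)Γ(b+ℓ+j−1))/(Γ(b+ℓ+n−1)Γ(b+j−1)). Then the sequence E_n defined by E_1 = 1 and the Laplace-transform recursion E_n = (1 − sgn(ℓ)ψ_{a,b,ℓ}(n)/λ_n)^{-1} Σ_{j=1}^{n-1} C(n,j−1)(λ_{n,n−j+1}/λ_n) E_j satisfies, for all n ≥ 1, E_n = Γ(b+ℓ+n−1)Γ(b)/(Γ(b+n−1)Γ(b+ℓ)),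 and in particular E_n ∼ (Γ(b)/Γ(b+ℓ)) n^ℓ as n → ∞. -/
open Filter Asymptotics Topology

lemma gamma_prod (x : ℝ) (hx : 0 < x) (k : ℕ) :
    Real.Gamma (x + k) = Real.Gamma x * ∏ j ∈ Finset.range k, (x + j) := by
  induction k with
  | zero => simp
  | succ k ih =>
    have hxk : (x + k) ≠ 0 := by positivity
    have : x + (k + 1 : ℕ) = (x + k) + 1 := by push_cast; ring
    rw [this, Real.Gamma_add_one hxk, ih, Finset.prod_range_succ]
    ring

lemma A_tendsto (x : ℝ) (hx : 0 < x) :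
    Tendsto (fun m : ℕ => Real.Gamma (x + m + 1) / ((m : ℝ) ^ x * m.factorial))
      atTop (𝓝 1) := by
  have hne : Real.Gamma x ≠ 0 := (Real.Gamma_pos_of_pos hx).ne'
  have h := Tendsto.div (tendsto_const_nhds (x := Real.Gamma x))
    (Real.GammaSeq_tendsto_Gamma x) hne
  rw [div_self hne] at h
  refine h.congr fun m => ?_
  unfold Real.GammaSeq
  simp only [Pi.div_apply]
  rw [div_div_eq_mul_div]
  have : Real.Gamma x * ∏ j ∈ Finset.range (m + 1), (x + j) = Real.Gamma (x + m + 1) := by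
    rw [← gamma_prod x hx (m + 1)]; push_cast; ring_nf
  rw [this]

/- The target sequence: for the special choice ψ_{a,b,ℓ}, the solution of the
Laplace-transform recursion is Γ(b+ℓ+n-1)Γ(b)/(Γ(b+n-1)Γ(b+ℓ)) ∼ (Γ(b)/Γ(b+ℓ)) n^ℓ. -/
theorem stmt16 (a b ℓ : ℝ) (ha : 0 < a) (hb : 0 < b) (hℓ : -b < ℓ)
    (s : ℝ) (hs : s = if 0 ≤ ℓ then 1 else -1)
    (lamnk : ℕ → ℕ → ℝ)
    (hlamnk : ∀ p k : ℕ, lamnk p k =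
      Real.Gamma (a + k - 2) * Real.Gamma (b + p - k) / Real.Gamma (a + b + p - 2))
    (lam : ℕ → ℝ)
    (hlam : ∀ n : ℕ, lam n = ∑ k ∈ Finset.Icc 2 n, (n.choose k : ℝ) * lamnk n k)
    (ψ : ℕ → ℝ)
    (hψ : ∀ n : ℕ, 2 ≤ n → s * ψ n =
      lam n - ∑ j ∈ Finset.Icc 1 (n - 1),
        (n.choose (j - 1) : ℝ) * lamnk n (n - j + 1) *
          (Real.Gamma (b + n - 1) * Real.Gamma (b + ℓ + j - 1) /
            (Real.Gamma (b + ℓ + n - 1) * Real.Gamma (b + j - 1))))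
    (E : ℕ → ℝ)
    (hE1 : E 1 = 1)
    (hErec : ∀ n : ℕ, 2 ≤ n →
      E n = (1 - s * ψ n / lam n)⁻¹ *
        ∑ j ∈ Finset.Icc 1 (n - 1),
          (n.choose (j - 1) : ℝ) * (lamnk n (n - j + 1) / lam n) * E j) :
    (∀ n : ℕ, 1 ≤ n →
      E n = Real.Gamma (b + ℓ + n - 1) * Real.Gamma b /
        (Real.Gamma (b + n - 1) * Real.Gamma (b + ℓ))) ∧
    (fun n : ℕ => E n) ~[atTop]
      (fun n : ℕ => Real.Gamma b / Real.Gamma (b + ℓ) * (n : ℝ) ^ ℓ) := by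
  have hbl : 0 < b + ℓ := by linarith
  have hGb : 0 < Real.Gamma b := Real.Gamma_pos_of_pos hb
  have hGbl : 0 < Real.Gamma (b + ℓ) := Real.Gamma_pos_of_pos hbl
  set G : ℕ → ℝ := fun n => Real.Gamma (b + ℓ + n - 1) * Real.Gamma b /
      (Real.Gamma (b + n - 1) * Real.Gamma (b + ℓ)) with hG
  have hgam : ∀ (c : ℝ), 0 < c → ∀ n : ℕ, 1 ≤ n → 0 < Real.Gamma (c + n - 1) := by
    intro c hc n hn
    have h1 : (1:ℝ) ≤ n := by exact_mod_cast hn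
    exact Real.Gamma_pos_of_pos (by linarith)
  have hGpos : ∀ n : ℕ, 1 ≤ n → 0 < G n := fun n hn =>
    div_pos (mul_pos (hgam _ hbl n hn) hGb) (mul_pos (hgam _ hb n hn) hGbl)
  have hmain : ∀ n : ℕ, 1 ≤ n → E n = G n := by
    intro n
    induction n using Nat.strong_induction_on with
    | _ n ih =>
      intro hn
      rcases hn.lt_or_eq with h2 | h1
      · -- case 2 ≤ n
        have hn2 : 2 ≤ n := h2
        have h2n : (2:ℝ) ≤ n := by exact_mod_cast hn2
        -- positivity of lam n
        have hlampos : 0 < lam n := by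
          rw [hlam]
          refine Finset.sum_pos (fun k hk => ?_) (Finset.nonempty_Icc.mpr hn2)
          obtain ⟨hk1, hk2⟩ := Finset.mem_Icc.mp hk
          have hkr1 : (2:ℝ) ≤ k := by exact_mod_cast hk1
          have hkr2 : (k:ℝ) ≤ n := by exact_mod_cast hk2
          have hch : 0 < (n.choose k : ℝ) := by exact_mod_cast Nat.choose_pos hk2
          refine mul_pos hch ?_
          rw [hlamnk]
          exact div_pos (mul_pos (Real.Gamma_pos_of_pos (by linarith))
            (Real.Gamma_pos_of_pos (by linarith))) (Real.Gamma_pos_of_pos (by linarith))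
        -- positivity of the coefficients c j
        have hcpos : ∀ j ∈ Finset.Icc 1 (n-1),
            0 < (n.choose (j-1) : ℝ) * lamnk n (n - j + 1) := by
          intro j hj
          obtain ⟨hj1, hj2⟩ := Finset.mem_Icc.mp hj
          have hch : 0 < (n.choose (j-1) : ℝ) := by
            exact_mod_cast Nat.choose_pos (by omega)
          refine mul_pos hch ?_
          rw [hlamnk]
          have hk1 : (2:ℝ) ≤ ((n - j + 1 : ℕ):ℝ) := by exact_mod_cast (by omega : 2 ≤ n - j + 1)
          have hk2 : ((n - j + 1 : ℕ):ℝ) ≤ n := by exact_mod_cast (by omega : n - j + 1 ≤ n)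
          exact div_pos (mul_pos (Real.Gamma_pos_of_pos (by linarith))
            (Real.Gamma_pos_of_pos (by linarith))) (Real.Gamma_pos_of_pos (by linarith))
        -- the ratio term equals G j / G n
        have hRG : ∀ j ∈ Finset.Icc 1 (n-1),
            Real.Gamma (b + n - 1) * Real.Gamma (b + ℓ + j - 1) /
              (Real.Gamma (b + ℓ + n - 1) * Real.Gamma (b + j - 1)) = G j / G n := by
          intro j hj
          obtain ⟨hj1, hj2⟩ := Finset.mem_Icc.mp hj
          have hjn : 1 ≤ n := by omega
          have g1 := hgam _ hbl j hj1
          have g2 := hgam _ hb j hj1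
          have g3 := hgam _ hbl n hjn
          have g4 := hgam _ hb n hjn
          simp only [hG]
          field_simp
        -- positivity of D = lam n - s * ψ n
        have hDsum : lam n - s * ψ n = ∑ j ∈ Finset.Icc 1 (n - 1),
            (n.choose (j - 1) : ℝ) * lamnk n (n - j + 1) *
              (Real.Gamma (b + n - 1) * Real.Gamma (b + ℓ + j - 1) /
                (Real.Gamma (b + ℓ + n - 1) * Real.Gamma (b + j - 1))) := by
          have := hψ n hn2; linarith
        have hDpos : 0 < lam n - s * ψ n := by
          rw [hDsum]
          refine Finset.sum_pos (fun j hj => ?_) (Finset.nonempty_Icc.mpr (by omega))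
          refine mul_pos (hcpos j hj) ?_
          obtain ⟨hj1, hj2⟩ := Finset.mem_Icc.mp hj
          have hjn : 1 ≤ n := by omega
          exact div_pos (mul_pos (hgam _ hb n hjn) (hgam _ hbl j hj1))
            (mul_pos (hgam _ hbl n hjn) (hgam _ hb j hj1))
        -- sum identity: S = (lam n - s ψ n) * G n
        have hS : ∑ j ∈ Finset.Icc 1 (n-1),
            (n.choose (j - 1) : ℝ) * lamnk n (n - j + 1) * G j
              = (lam n - s * ψ n) * G n := by
          rw [hDsum, Finset.sum_mul]
          refine Finset.sum_congr rfl fun j hj => ?_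
          rw [hRG j hj]
          have hGn := (hGpos n (by omega)).ne'
          field_simp
        -- now compute E n
        rw [hErec n hn2]
        have hT : ∑ j ∈ Finset.Icc 1 (n - 1),
            (n.choose (j - 1) : ℝ) * (lamnk n (n - j + 1) / lam n) * E j
              = (lam n - s * ψ n) * G n / lam n := by
          rw [← hS, Finset.sum_div]
          refine Finset.sum_congr rfl fun j hj => ?_
          obtain ⟨hj1, hj2⟩ := Finset.mem_Icc.mp hj
          rw [ih j (by omega) hj1]
          ring
        rw [hT]
        have h1 : 1 - s * ψ n / lam n = (lam n - s * ψ n) / lam n := by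
          field_simp
        rw [h1, inv_div]
        have hDne := hDpos.ne'
        have hLne := hlampos.ne'
        field_simp
      · -- case n = 1
        subst h1
        rw [hE1]
        simp only [hG]
        have e1 : b + ℓ + ((1:ℕ):ℝ) - 1 = b + ℓ := by push_cast; ring
        have e2 : b + ((1:ℕ):ℝ) - 1 = b := by push_cast; ring
        rw [e1, e2, mul_comm (Real.Gamma (b + ℓ))]
        exact (div_self (by positivity)).symm
  refine ⟨fun n hn => by simpa [hG] using hmain n hn, ?_⟩
  -- asymptotics
  have hT : Tendsto (fun n : ℕ => E n /
      (Real.Gamma b / Real.Gamma (b + ℓ) * (n : ℝ) ^ ℓ)) atTop (𝓝 1) := by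
    rw [← tendsto_add_atTop_iff_nat 2]
    have h1 := A_tendsto (b + ℓ) hbl
    have h2 := A_tendsto b hb
    have h3 : Tendsto (fun m : ℕ => ((m:ℝ) / ((m:ℝ) + 2)) ^ ℓ) atTop (𝓝 1) := by
      have := (tendsto_natCast_div_add_atTop (2:ℝ)).rpow_const (p := ℓ) (Or.inl one_ne_zero)
      simpa using this
    have h := (h1.div h2 one_ne_zero).mul h3
    norm_num at h
    refine h.congr' ?_
    filter_upwards [eventually_ge_atTop 1] with m hm
    have hm0 : (0:ℝ) < m := by exact_mod_cast hm
    rw [hmain (m + 2) (by omega)]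
    simp only [hG]
    have e1 : b + ℓ + ((m + 2:ℕ):ℝ) - 1 = b + ℓ + m + 1 := by push_cast; ring
    have e2 : b + ((m + 2:ℕ):ℝ) - 1 = b + m + 1 := by push_cast; ring
    have e3 : ((m + 2:ℕ):ℝ) = (m:ℝ) + 2 := by push_cast; ring
    rw [e1, e2, e3]
    have hg1 : 0 < Real.Gamma (b + ℓ + m + 1) := Real.Gamma_pos_of_pos (by positivity)
    have hg2 : 0 < Real.Gamma (b + m + 1) := Real.Gamma_pos_of_pos (by positivity)
    have hf : (0:ℝ) < m.factorial := by exact_mod_cast m.factorial_pos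
    have hp1 : (0:ℝ) < (m:ℝ) ^ b := Real.rpow_pos_of_pos hm0 b
    have hp2 : (0:ℝ) < (m:ℝ) ^ ℓ := Real.rpow_pos_of_pos hm0 ℓ
    have hp3 : (0:ℝ) < ((m:ℝ) + 2) ^ ℓ := Real.rpow_pos_of_pos (by positivity) ℓ
    rw [Real.div_rpow hm0.le (by positivity : (0:ℝ) ≤ (m:ℝ) + 2),
      Real.rpow_add hm0 b ℓ]
    field_simp
  have hvne : ∀ᶠ n : ℕ in atTop,
      Real.Gamma b / Real.Gamma (b + ℓ) * (n : ℝ) ^ ℓ ≠ 0 := by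
    filter_upwards [eventually_ge_atTop 1] with n hn
    have hn0 : (0:ℝ) < n := by exact_mod_cast hn
    have := Real.rpow_pos_of_pos hn0 ℓ
    positivity
  exact (isEquivalent_iff_tendsto_one hvne).mpr (by simpa [Pi.div_def] using hT)
end

section
/- For a, b > 0 and ℓ ∈ (−b,∞), with ψ_{a,b,ℓ} defined by sgn(ℓ)ψ_{a,b,ℓ}(n) = λ_n(β_{a,b}) − Σ_{j=1}^{n-1} C(n,j−1)λ_{n,n−j+1}(β_{a,b}) Γ(b+n−1)Γ(b+ℓ+j−1)/(Γ(b+ℓ+n−1)Γ(b+j−1)), one has the exact identity: 1 − sgn(ℓ)·ψ_{a,b,ℓ}(n)/λ_n(β_{a,b}) = (Γ(b+n−1)/Γ(b+ℓ+n−1)) · (Γ(a+b+ℓ+n−2)/Γ(a+b+n−2)) · (λ_n(β_{a,b+ℓ})/λ_n(β_{a,b})). -/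
/- The exact quotient identity for 1 - sgn(ℓ)ψ_{a,b,ℓ}(n)/λ_n(β_{a,b}). -/
theorem stmt17 (a b ℓ : ℝ) (ha : 0 < a) (hb : 0 < b) (hℓ : -b < ℓ)
    (s : ℝ) (hs : s = if 0 ≤ ℓ then 1 else -1)
    (lamnk : ℕ → ℕ → ℝ)
    (hlamnk : ∀ p k : ℕ, lamnk p k =
      Real.Gamma (a + k - 2) * Real.Gamma (b + p - k) / Real.Gamma (a + b + p - 2))
    (lam : ℕ → ℝ)
    (hlam : ∀ n : ℕ, lam n = ∑ k ∈ Finset.Icc 2 n, (n.choose k : ℝ) * lamnk n k)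
    (lamnk' : ℕ → ℕ → ℝ)
    (hlamnk' : ∀ p k : ℕ, lamnk' p k =
      Real.Gamma (a + k - 2) * Real.Gamma (b + ℓ + p - k) / Real.Gamma (a + b + ℓ + p - 2))
    (lam' : ℕ → ℝ)
    (hlam' : ∀ n : ℕ, lam' n = ∑ k ∈ Finset.Icc 2 n, (n.choose k : ℝ) * lamnk' n k)
    (ψ : ℕ → ℝ)
    (hψ : ∀ n : ℕ, 2 ≤ n → s * ψ n =
      lam n - ∑ j ∈ Finset.Icc 1 (n - 1),
        (n.choose (j - 1) : ℝ) * lamnk n (n - j + 1) *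
          (Real.Gamma (b + n - 1) * Real.Gamma (b + ℓ + j - 1) /
            (Real.Gamma (b + ℓ + n - 1) * Real.Gamma (b + j - 1)))) :
    ∀ n : ℕ, 2 ≤ n →
      1 - s * ψ n / lam n =
        Real.Gamma (b + n - 1) / Real.Gamma (b + ℓ + n - 1) *
          (Real.Gamma (a + b + ℓ + n - 2) / Real.Gamma (a + b + n - 2)) *
          (lam' n / lam n) := by
  intro n hn
  have hbl : 0 < b + ℓ := by linarith
  have hn2 : (2:ℝ) ≤ (n:ℝ) := by exact_mod_cast hn
  have hΓ : ∀ x : ℝ, 0 < x → Real.Gamma x ≠ 0 := fun x hx => (Real.Gamma_pos_of_pos hx).ne'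
  have hlampos : 0 < lam n := by
    rw [hlam]
    apply Finset.sum_pos
    · intro k hk
      simp only [Finset.mem_Icc] at hk
      rw [hlamnk]
      have hk2 : (2:ℝ) ≤ (k:ℝ) := by exact_mod_cast hk.1
      have hkn : (k:ℝ) ≤ (n:ℝ) := by exact_mod_cast hk.2
      have h1 : 0 < a + k - 2 := by linarith
      have h2 : 0 < b + n - k := by linarith
      have h3 : 0 < a + b + n - 2 := by linarith
      have hc : 0 < ((n.choose k : ℕ) : ℝ) := by exact_mod_cast Nat.choose_pos hk.2
      exact mul_pos hc (div_pos (mul_pos (Real.Gamma_pos_of_pos h1)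
        (Real.Gamma_pos_of_pos h2)) (Real.Gamma_pos_of_pos h3))
    · exact Finset.nonempty_Icc.mpr hn
  have hkey : (∑ j ∈ Finset.Icc 1 (n - 1),
        (n.choose (j - 1) : ℝ) * lamnk n (n - j + 1) *
          (Real.Gamma (b + n - 1) * Real.Gamma (b + ℓ + j - 1) /
            (Real.Gamma (b + ℓ + n - 1) * Real.Gamma (b + j - 1)))) =
      Real.Gamma (b + n - 1) / Real.Gamma (b + ℓ + n - 1) *
        (Real.Gamma (a + b + ℓ + n - 2) / Real.Gamma (a + b + n - 2)) * lam' n := by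
    rw [hlam', Finset.mul_sum]
    refine Finset.sum_nbij' (fun j => n - j + 1) (fun k => n - k + 1) ?_ ?_ ?_ ?_ ?_
    · intro j hj
      simp only [Finset.mem_Icc] at hj ⊢
      omega
    · intro k hk
      simp only [Finset.mem_Icc] at hk ⊢
      omega
    · intro j hj
      simp only [Finset.mem_Icc] at hj
      omega
    · intro k hk
      simp only [Finset.mem_Icc] at hk
      omega
    · intro j hj
      simp only [Finset.mem_Icc] at hj
      obtain ⟨hj1, hj2⟩ := hj
      rw [hlamnk, hlamnk']
      have hch : n.choose (n - j + 1) = n.choose (j - 1) := by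
        have h1 : n - j + 1 = n - (j - 1) := by omega
        rw [h1, Nat.choose_symm (by omega : j - 1 ≤ n)]
      rw [hch]
      have hjn : j ≤ n := by omega
      have hcast : ((n - j + 1 : ℕ) : ℝ) = (n:ℝ) - j + 1 := by
        push_cast [Nat.cast_sub hjn]; ring
      rw [hcast]
      have hj1' : (1:ℝ) ≤ (j:ℝ) := by exact_mod_cast hj1
      have hjn' : (j:ℝ) ≤ (n:ℝ) - 1 := by
        have : (j:ℝ) ≤ ((n-1 : ℕ):ℝ) := by exact_mod_cast hj2
        rw [Nat.cast_sub (by omega : 1 ≤ n)] at this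
        simpa using this
      have e1 : b + (n:ℝ) - ((n:ℝ) - j + 1) = b + j - 1 := by ring
      have e2 : b + ℓ + (n:ℝ) - ((n:ℝ) - j + 1) = b + ℓ + j - 1 := by ring
      rw [e1, e2]
      have g1 : Real.Gamma (a + b + n - 2) ≠ 0 := hΓ _ (by linarith)
      have g2 : Real.Gamma (a + b + ℓ + n - 2) ≠ 0 := hΓ _ (by linarith)
      have g3 : Real.Gamma (b + j - 1) ≠ 0 := hΓ _ (by linarith)
      have g4 : Real.Gamma (b + ℓ + n - 1) ≠ 0 := hΓ _ (by linarith)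
      field_simp
  have hψn := hψ n hn
  rw [hkey] at hψn
  have hs2 : s * ψ n = lam n - Real.Gamma (b + n - 1) / Real.Gamma (b + ℓ + n - 1) *
      (Real.Gamma (a + b + ℓ + n - 2) / Real.Gamma (a + b + n - 2)) * lam' n := hψn
  rw [hs2]
  field_simp
  ring
end

section
/- For a ∈ (0,1), b > 0 and ℓ ∈ (−b,∞), the sequence ψ_{a,b,ℓ} satisfies sgn(ℓ)·ψ_{a,b,ℓ}(n) = (Γ(a)ℓ/((2−a)(1−a))) n^{1−a} + L_{a,b}(ℓ) + o(n^{1−a}) as n → ∞; in particular sgn(ℓ)ψ_{a,b,ℓ}(n) ∼ (Γ(a)ℓ/((2−a)(1−a))) n^{1−a}. -/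
open Filter Asymptotics


lemma sumF : ∀ (n : ℕ) (a x : ℝ), (∀ z : ℤ, a ≠ z) → 0 < x →
    ∑ k ∈ Finset.range (n+1), (n.choose k : ℝ) *
      (Real.Gamma (a + k - 2) * Real.Gamma (x + n - k))
    = Real.Gamma (a-2) * Real.Gamma x * ∏ i ∈ Finset.range n, (a + x - 2 + i) := by
  intro n
  induction n with
  | zero => intro a x ha hx; simp
  | succ n IH =>
    intro a x ha hx
    have ha1 : ∀ z : ℤ, a + 1 ≠ z := by
      intro z h
      exact ha (z - 1) (by push_cast; linarith)
    have ha2 : a - 2 ≠ 0 := by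
      intro h
      exact ha 2 (by push_cast; linarith)
    have hGa : Real.Gamma (a - 1) = (a - 2) * Real.Gamma (a - 2) := by
      have := Real.Gamma_add_one ha2
      rw [show a - 2 + 1 = a - 1 by ring] at this
      exact this
    have hGx : Real.Gamma (x + 1) = x * Real.Gamma x := Real.Gamma_add_one hx.ne'
    -- main rearrangement
    rw [Finset.sum_range_succ']
    have h1 : ∀ k ∈ Finset.range (n+1),
        ((n+1).choose (k+1) : ℝ) * (Real.Gamma (a + (k+1) - 2) * Real.Gamma (x + (n+1) - (k+1)))
        = (n.choose k : ℝ) * (Real.Gamma ((a+1) + k - 2) * Real.Gamma (x + n - k))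
          + (n.choose (k+1) : ℝ) * (Real.Gamma (a + (k+1) - 2) * Real.Gamma (x + (n+1) - (k+1))) := by
      intro k _
      rw [Nat.choose_succ_succ]
      push_cast
      ring_nf
      rw [Nat.add_comm 1 k]
      ring
    have e1 : ∑ k ∈ Finset.range (n+1), (n.choose k : ℝ) *
        (Real.Gamma ((a+1) + k - 2) * Real.Gamma (x + n - k))
        = Real.Gamma (a-1) * Real.Gamma x * ∏ i ∈ Finset.range n, (a + x - 1 + i) := by
      rw [IH (a+1) x ha1 hx, show a+1-2 = a-1 by ring]
      congr 1
      exact Finset.prod_congr rfl (fun i _ => by ring)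
    have e2 : ∑ k ∈ Finset.range (n+1), (n.choose k : ℝ) *
        (Real.Gamma (a + k - 2) * Real.Gamma ((x+1) + n - k))
        = Real.Gamma (a-2) * (x * Real.Gamma x) * ∏ i ∈ Finset.range n, (a + x - 1 + i) := by
      rw [IH a (x+1) ha (by linarith), hGx]
      congr 1
      exact Finset.prod_congr rfl (fun i _ => by ring)
    have harg : ∑ k ∈ Finset.range (n+1), (n.choose k : ℝ) *
        (Real.Gamma (a + k - 2) * Real.Gamma (x + (n+1) - k))
        = ∑ k ∈ Finset.range (n+1), (n.choose k : ℝ) *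
        (Real.Gamma (a + k - 2) * Real.Gamma ((x+1) + n - k)) :=
      Finset.sum_congr rfl (fun k _ => by ring_nf)
    have hkey : ∑ k ∈ Finset.range (n+1+1), (n.choose k : ℝ) *
        (Real.Gamma (a + k - 2) * Real.Gamma (x + (n+1) - k))
        = Real.Gamma (a-2) * (x * Real.Gamma x) * ∏ i ∈ Finset.range n, (a + x - 1 + i) := by
      rw [Finset.sum_range_succ, harg, e2, Nat.choose_succ_self]
      simp
    have etail : ∑ k ∈ Finset.range (n+1), (n.choose (k+1) : ℝ) *
        (Real.Gamma (a + (k+1) - 2) * Real.Gamma (x + (n+1) - (k+1)))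
        = Real.Gamma (a-2) * (x * Real.Gamma x) * ∏ i ∈ Finset.range n, (a + x - 1 + i)
          - Real.Gamma (a-2) * Real.Gamma (x + (n + 1)) := by
      have hrs := Finset.sum_range_succ' (fun k : ℕ => (n.choose k : ℝ) *
        (Real.Gamma (a + k - 2) * Real.Gamma (x + (n+1) - k))) (n+1)
      rw [hkey] at hrs
      have hc : ∑ k ∈ Finset.range (n+1), (n.choose (k+1) : ℝ) *
          (Real.Gamma (a + ((k+1 : ℕ) : ℝ) - 2) * Real.Gamma (x + (n+1) - ((k+1 : ℕ) : ℝ)))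
          = ∑ k ∈ Finset.range (n+1), (n.choose (k+1) : ℝ) *
          (Real.Gamma (a + (k+1) - 2) * Real.Gamma (x + (n+1) - (k+1))) :=
        Finset.sum_congr rfl (fun k _ => by push_cast; ring_nf)
      have hf0 : ((n.choose 0 : ℕ) : ℝ) * (Real.Gamma (a + ((0:ℕ) : ℝ) - 2) *
          Real.Gamma (x + (n+1) - ((0:ℕ) : ℝ)))
          = Real.Gamma (a-2) * Real.Gamma (x + (n + 1)) := by
        norm_num
      rw [hc, hf0] at hrs
      linarith [hrs]
    have e3 : ∑ k ∈ Finset.range (n+1), ((n+1).choose (k+1) : ℝ) *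
        (Real.Gamma (a + (k+1) - 2) * Real.Gamma (x + (n+1) - (k+1)))
        = Real.Gamma (a-2) * (x * Real.Gamma x) * ∏ i ∈ Finset.range n, (a + x - 1 + i)
          + (Real.Gamma (a-1) * Real.Gamma x * ∏ i ∈ Finset.range n, (a + x - 1 + i)
             - Real.Gamma (a-2) * Real.Gamma (x + (n + 1))) := by
      rw [Finset.sum_congr rfl h1, Finset.sum_add_distrib, e1, etail]
      ring
    have hprod : ∏ i ∈ Finset.range (n+1), (a + x - 2 + (i:ℝ))
        = (∏ i ∈ Finset.range n, (a + x - 1 + (i:ℝ))) * (a + x - 2) := by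
      rw [Finset.prod_range_succ']
      congr 1
      · exact Finset.prod_congr rfl (fun i _ => by push_cast; ring)
      · norm_num
    push_cast
    rw [e3, hprod, hGa]
    simp only [Nat.choose_zero_right, Nat.cast_one, add_zero, sub_zero]
    ring

lemma Gamma_prod (y : ℝ) : ∀ (n : ℕ), (∀ i : ℕ, i < n → y + i ≠ 0) →
    Real.Gamma (y + n) = Real.Gamma y * ∏ i ∈ Finset.range n, (y + i) := by
  intro n
  induction n with
  | zero => intro _; simp
  | succ n IH =>
    intro h
    have h1 : Real.Gamma (y + n + 1) = (y + n) * Real.Gamma (y + n) :=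
      Real.Gamma_add_one (h n (Nat.lt_succ_self n))
    push_cast
    rw [show y + (n + 1 : ℝ) = y + n + 1 by ring, h1,
      IH (fun i hi => h i (Nat.lt_succ_of_lt hi)), Finset.prod_range_succ]
    ring

lemma Qlem (y : ℝ) (hy : -2 < y) (c : ℝ) (n : ℕ) (hn : 2 ≤ n) :
    c * ∏ i ∈ Finset.range n, (y + i) = c / Real.Gamma y * Real.Gamma (y + n) := by
  by_cases h0 : y = 0
  · subst h0
    rw [Real.Gamma_zero]
    rw [Finset.prod_eq_zero (Finset.mem_range.mpr (lt_of_lt_of_le two_pos hn) : 0 ∈ Finset.range n)]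
    · simp
    · simp
  by_cases h1 : y = -1
  · subst h1
    have : Real.Gamma (-1) = 0 := by
      have := Real.Gamma_neg_nat_eq_zero 1
      simpa using this
    rw [this]
    rw [Finset.prod_eq_zero (Finset.mem_range.mpr (lt_of_lt_of_le (by norm_num) hn) : 1 ∈ Finset.range n)]
    · simp
    · simp
  · have hne : ∀ i : ℕ, i < n → y + i ≠ 0 := by
      intro i _ h
      have hi2 : (i : ℝ) < 2 := by linarith
      have hilt : i < 2 := by exact_mod_cast hi2
      interval_cases i
      · exact h0 (by push_cast at h; linarith)
      · exact h1 (by push_cast at h; linarith)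
    have hG := Gamma_prod y n hne
    have hGy : Real.Gamma y ≠ 0 := by
      apply Real.Gamma_ne_zero
      intro m
      match m with
      | 0 => simpa using h0
      | 1 => by_contra hc; push_cast at hc; exact h1 (by linarith)
      | (m+2) => intro hc; push_cast at hc; have : (0:ℝ) ≤ (m:ℝ) := Nat.cast_nonneg m; linarith
    rw [hG]
    field_simp

lemma wendel_upper (x s : ℝ) (hx : 0 < x) (hs0 : 0 ≤ s) (hs1 : s ≤ 1) :
    Real.Gamma (x + s) ≤ Real.Gamma x * x ^ s := by
  have h := Real.convexOn_log_Gamma.2 (Set.mem_Ioi.mpr hx)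
    (Set.mem_Ioi.mpr (by linarith : (0:ℝ) < x + 1))
    (by linarith : (0:ℝ) ≤ 1 - s) hs0 (by ring)
  simp only [smul_eq_mul, Function.comp_apply] at h
  rw [show (1-s)*x + s*(x+1) = x + s by ring, Real.Gamma_add_one hx.ne',
    Real.log_mul hx.ne' (Real.Gamma_pos_of_pos hx).ne'] at h
  have hgt : 0 < Real.Gamma (x+s) := Real.Gamma_pos_of_pos (by linarith)
  have hrt : 0 < Real.Gamma x * x ^ s :=
    mul_pos (Real.Gamma_pos_of_pos hx) (Real.rpow_pos_of_pos hx s)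
  rw [← Real.log_le_log_iff hgt hrt, Real.log_mul (Real.Gamma_pos_of_pos hx).ne'
    (Real.rpow_pos_of_pos hx s).ne', Real.log_rpow hx]
  nlinarith [Real.log_le_log_iff hgt hrt]

lemma wendel_lower (x s : ℝ) (hx : 0 < x) (hs0 : 0 ≤ s) (hs1 : s ≤ 1) :
    x * Real.Gamma x ≤ Real.Gamma (x + s) * (x + s) ^ (1 - s) := by
  have hxs : 0 < x + s := by linarith
  have h := Real.convexOn_log_Gamma.2 (Set.mem_Ioi.mpr hxs)
    (Set.mem_Ioi.mpr (by linarith : (0:ℝ) < x + s + 1))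
    hs0 (by linarith : (0:ℝ) ≤ 1 - s) (by ring)
  simp only [smul_eq_mul, Function.comp_apply] at h
  rw [show s*(x+s) + (1-s)*(x+s+1) = x + 1 by ring, Real.Gamma_add_one hxs.ne',
    Real.log_mul hxs.ne' (Real.Gamma_pos_of_pos hxs).ne', Real.Gamma_add_one hx.ne',
    Real.log_mul hx.ne' (Real.Gamma_pos_of_pos hx).ne'] at h
  have hgt : 0 < x * Real.Gamma x := mul_pos hx (Real.Gamma_pos_of_pos hx)
  have hrt : 0 < Real.Gamma (x+s) * (x+s) ^ (1-s) :=
    mul_pos (Real.Gamma_pos_of_pos hxs) (Real.rpow_pos_of_pos hxs _)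
  rw [← Real.log_le_log_iff hgt hrt, Real.log_mul hx.ne' (Real.Gamma_pos_of_pos hx).ne',
    Real.log_mul (Real.Gamma_pos_of_pos hxs).ne' (Real.rpow_pos_of_pos hxs _).ne',
    Real.log_rpow hxs]
  nlinarith

lemma wendel_tendsto (s d : ℝ) (hs0 : 0 ≤ s) (hs1 : s ≤ 1) :
    Filter.Tendsto (fun n : ℕ => Real.Gamma ((n:ℝ) + d + s) /
      (Real.Gamma ((n:ℝ) + d) * ((n:ℝ) + d) ^ s)) Filter.atTop (nhds 1) := by
  have hcast : Filter.Tendsto (fun n : ℕ => (n:ℝ)) Filter.atTop Filter.atTop :=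
    tendsto_natCast_atTop_atTop
  have hx : Filter.Tendsto (fun n : ℕ => (n:ℝ) + d) Filter.atTop Filter.atTop :=
    Filter.tendsto_atTop_add_const_right _ d hcast
  have h0 : ∀ᶠ n : ℕ in Filter.atTop, 0 < (n:ℝ) + d := hx.eventually_gt_atTop 0
  -- lower bound function tends to 1
  have hxs : Filter.Tendsto (fun n : ℕ => (n:ℝ) + d + s) Filter.atTop Filter.atTop :=
    Filter.tendsto_atTop_add_const_right _ s hx
  have hq : Filter.Tendsto (fun n : ℕ => ((n:ℝ) + d) / ((n:ℝ) + d + s))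
      Filter.atTop (nhds 1) := by
    have hinv : Filter.Tendsto (fun n : ℕ => s / ((n:ℝ) + d + s)) Filter.atTop (nhds 0) := by
      simpa [div_eq_mul_inv] using hxs.inv_tendsto_atTop.const_mul s
    have := hinv.const_sub 1
    rw [sub_zero] at this
    apply this.congr'
    filter_upwards [hxs.eventually_gt_atTop 0] with n hn
    field_simp
    ring
  have hlow : Filter.Tendsto (fun n : ℕ => (((n:ℝ) + d) / ((n:ℝ) + d + s)) ^ (1 - s))
      Filter.atTop (nhds 1) := by
    have := hq.rpow_const (p := 1 - s) (Or.inr (by linarith))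
    simpa using this
  apply tendsto_of_tendsto_of_tendsto_of_le_of_le' hlow tendsto_const_nhds
  · -- lower ≤ ratio
    filter_upwards [h0] with n hn
    set x := (n:ℝ) + d with hxdef
    have hxspos : 0 < x + s := by linarith
    have key := wendel_lower x s hn hs0 hs1
    rw [Real.div_rpow hn.le hxspos.le, div_le_div_iff₀ (Real.rpow_pos_of_pos hxspos _)
      (mul_pos (Real.Gamma_pos_of_pos hn) (Real.rpow_pos_of_pos hn s))]
    have hxx : x ^ (1-s) * x ^ s = x := by
      rw [← Real.rpow_add hn, show 1 - s + s = 1 by ring, Real.rpow_one]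
    calc x ^ (1-s) * (Real.Gamma x * x ^ s) = (x ^ (1-s) * x ^ s) * Real.Gamma x := by ring
    _ = x * Real.Gamma x := by rw [hxx]
    _ ≤ Real.Gamma (x + s) * (x + s) ^ (1-s) := key
  · -- ratio ≤ 1
    filter_upwards [h0] with n hn
    set x := (n:ℝ) + d
    have := wendel_upper x s hn hs0 hs1
    rw [div_le_one (mul_pos (Real.Gamma_pos_of_pos hn) (Real.rpow_pos_of_pos hn s))]
    exact this

lemma nratio_tendsto (c c' : ℝ) :
    Filter.Tendsto (fun n : ℕ => ((n:ℝ) + c) / ((n:ℝ) + c')) Filter.atTop (nhds 1) := by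
  have hx : Filter.Tendsto (fun n : ℕ => (n:ℝ) + c') Filter.atTop Filter.atTop :=
    Filter.tendsto_atTop_add_const_right _ c' tendsto_natCast_atTop_atTop
  have hinv : Filter.Tendsto (fun n : ℕ => (c' - c) / ((n:ℝ) + c')) Filter.atTop (nhds 0) := by
    simpa [div_eq_mul_inv] using hx.inv_tendsto_atTop.const_mul (c' - c)
  have h := hinv.const_sub 1
  rw [sub_zero] at h
  apply h.congr'
  filter_upwards [hx.eventually_gt_atTop 0] with n hn
  field_simp
  ring

lemma Glim (s u : ℝ) (hs0 : 0 ≤ s) (hs1 : s ≤ 1) :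
    Filter.Tendsto (fun n : ℕ => Real.Gamma ((n:ℝ) + u + s) / Real.Gamma ((n:ℝ) + u) / (n:ℝ) ^ s)
      Filter.atTop (nhds 1) := by
  have hW := wendel_tendsto s u hs0 hs1
  have hrp : Filter.Tendsto (fun n : ℕ => (((n:ℝ) + u) / (n:ℝ)) ^ s) Filter.atTop (nhds 1) := by
    have h0 := (nratio_tendsto u 0).rpow_const (p := s) (Or.inl one_ne_zero)
    rw [Real.one_rpow] at h0
    apply h0.congr
    intro n
    rw [add_zero]
  have hmul := hW.mul hrp
  rw [mul_one] at hmul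
  apply hmul.congr'
  have hx : Filter.Tendsto (fun n : ℕ => (n:ℝ) + u) Filter.atTop Filter.atTop :=
    Filter.tendsto_atTop_add_const_right _ u tendsto_natCast_atTop_atTop
  filter_upwards [hx.eventually_gt_atTop 0, Filter.eventually_gt_atTop 0] with n hxp hn
  have hnp : (0:ℝ) < (n:ℝ) := by exact_mod_cast hn
  rw [Real.div_rpow hxp.le hnp.le]
  have h1 : Real.Gamma ((n:ℝ) + u) ≠ 0 := (Real.Gamma_pos_of_pos hxp).ne'
  have h2 : ((n:ℝ) + u) ^ s ≠ 0 := (Real.rpow_pos_of_pos hxp s).ne'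
  have h3 : ((n:ℝ)) ^ s ≠ 0 := (Real.rpow_pos_of_pos hnp s).ne'
  field_simp

lemma Qlim (s u v : ℝ) (hs0 : 0 ≤ s) (hs1 : s ≤ 1) :
    Filter.Tendsto (fun n : ℕ => Real.Gamma ((n:ℝ) + v) * Real.Gamma ((n:ℝ) + u + s) /
      (Real.Gamma ((n:ℝ) + u) * Real.Gamma ((n:ℝ) + v + s))) Filter.atTop (nhds 1) := by
  have hWu := wendel_tendsto s u hs0 hs1
  have hWv := wendel_tendsto s v hs0 hs1
  have hrp : Filter.Tendsto (fun n : ℕ => (((n:ℝ) + u) / ((n:ℝ) + v)) ^ s)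
      Filter.atTop (nhds 1) := by
    have h0 := (nratio_tendsto u v).rpow_const (p := s) (Or.inl one_ne_zero)
    rwa [Real.one_rpow] at h0
  have hmul := (hWu.div hWv one_ne_zero).mul hrp
  rw [div_one, mul_one] at hmul
  apply hmul.congr'
  have hx : Filter.Tendsto (fun n : ℕ => (n:ℝ) + u) Filter.atTop Filter.atTop :=
    Filter.tendsto_atTop_add_const_right _ u tendsto_natCast_atTop_atTop
  have hy : Filter.Tendsto (fun n : ℕ => (n:ℝ) + v) Filter.atTop Filter.atTop :=
    Filter.tendsto_atTop_add_const_right _ v tendsto_natCast_atTop_atTop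
  filter_upwards [hx.eventually_gt_atTop 0, hy.eventually_gt_atTop 0] with n hxp hyp
  rw [Real.div_rpow hxp.le hyp.le, Pi.div_apply]
  have h1 : Real.Gamma ((n:ℝ) + u) ≠ 0 := (Real.Gamma_pos_of_pos hxp).ne'
  have h2 : Real.Gamma ((n:ℝ) + v) ≠ 0 := (Real.Gamma_pos_of_pos hyp).ne'
  have h3 : ((n:ℝ) + u) ^ s ≠ 0 := (Real.rpow_pos_of_pos hxp s).ne'
  have h4 : ((n:ℝ) + v) ^ s ≠ 0 := (Real.rpow_pos_of_pos hyp s).ne'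
  have h5 : Real.Gamma ((n:ℝ) + u + s) ≠ 0 := (Real.Gamma_pos_of_pos (by linarith)).ne'
  have h6 : Real.Gamma ((n:ℝ) + v + s) ≠ 0 := (Real.Gamma_pos_of_pos (by linarith)).ne'
  field_simp

lemma sumIcc (a x : ℝ) (ha : ∀ z : ℤ, a ≠ z) (hx : 0 < x) (n : ℕ) (hn : 2 ≤ n) :
    ∑ k ∈ Finset.Icc 2 n, (n.choose k : ℝ) * (Real.Gamma (a + k - 2) * Real.Gamma (x + n - k))
    = Real.Gamma (a-2) * Real.Gamma x * ∏ i ∈ Finset.range n, (a + x - 2 + i)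
      - Real.Gamma (a-2) * Real.Gamma (x + n) - n * Real.Gamma (a-1) * Real.Gamma (x + n - 1) := by
  have h := sumF n a x ha hx
  rw [Finset.range_eq_Ico,
    ← Finset.sum_Ico_consecutive _ (by norm_num : (0:ℕ) ≤ 2) (by omega : 2 ≤ n+1)] at h
  have h2 : ∑ k ∈ Finset.Ico 0 2, (n.choose k : ℝ) *
      (Real.Gamma (a + k - 2) * Real.Gamma (x + n - k))
      = Real.Gamma (a-2) * Real.Gamma (x + n) + n * Real.Gamma (a-1) * Real.Gamma (x + n - 1) := by
    have : Finset.Ico 0 2 = ({0, 1} : Finset ℕ) := by decide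
    rw [this, Finset.sum_pair (by norm_num : (0:ℕ) ≠ 1)]
    simp only [Nat.choose_zero_right, Nat.choose_one_right, Nat.cast_zero, Nat.cast_one]
    push_cast
    ring_nf
  have h3 : Finset.Ico 2 (n+1) = Finset.Icc 2 n := Finset.Ico_add_one_right_eq_Icc 2 n
  rw [h2, h3] at h
  linarith

lemma sumJ (a x : ℝ) (ha : ∀ z : ℤ, a ≠ z) (hx : 0 < x) (n : ℕ) (hn : 2 ≤ n) :
    ∑ j ∈ Finset.Icc 1 (n-1), (n.choose (j-1) : ℝ) *
      (Real.Gamma (a + n - j - 1) * Real.Gamma (x + j - 1))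
    = Real.Gamma (a-2) * Real.Gamma x * ∏ i ∈ Finset.range n, (a + x - 2 + i)
      - Real.Gamma (a-2) * Real.Gamma (x + n) - n * Real.Gamma (a-1) * Real.Gamma (x + n - 1) := by
  rw [← sumIcc a x ha hx n hn]
  apply Finset.sum_nbij' (i := fun j => n + 1 - j) (j := fun k => n + 1 - k)
  · intro j hj
    simp only [Finset.mem_Icc] at *
    omega
  · intro k hk
    simp only [Finset.mem_Icc] at *
    omega
  · intro j hj; simp only [Finset.mem_Icc] at hj; omega
  · intro k hk; simp only [Finset.mem_Icc] at hk; omega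
  · intro j hj
    simp only [Finset.mem_Icc] at hj
    obtain ⟨hj1, hj2⟩ := hj
    have hjn : j ≤ n := by omega
    have hch : n.choose (j-1) = n.choose (n+1-j) := by
      rw [← Nat.choose_symm (by omega : j - 1 ≤ n)]
      congr 1
      omega
    have hc1 : ((n+1-j : ℕ) : ℝ) = (n:ℝ) + 1 - j := by
      have : j ≤ n + 1 := by omega
      push_cast [this]
      ring
    rw [hch]
    congr 1
    rw [show a + ((n+1-j : ℕ) : ℝ) - 2 = a + (n:ℝ) - j - 1 by rw [hc1]; ring,
      show x + (n:ℝ) - ((n+1-j : ℕ) : ℝ) = x + (j:ℝ) - 1 by rw [hc1]; ring]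

lemma exact_formula (a b ℓ : ℝ) (ha0 : 0 < a) (ha1 : a < 1) (hb : 0 < b) (hℓ : -b < ℓ)
    (s : ℝ)
    (lamnk : ℕ → ℕ → ℝ)
    (hlamnk : ∀ p k : ℕ, lamnk p k =
      Real.Gamma (a + k - 2) * Real.Gamma (b + p - k) / Real.Gamma (a + b + p - 2))
    (lam : ℕ → ℝ)
    (hlam : ∀ n : ℕ, lam n = ∑ k ∈ Finset.Icc 2 n, (n.choose k : ℝ) * lamnk n k)
    (ψ : ℕ → ℝ)
    (hψ : ∀ n : ℕ, 2 ≤ n → s * ψ n =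
      lam n - ∑ j ∈ Finset.Icc 1 (n - 1),
        (n.choose (j - 1) : ℝ) * lamnk n (n - j + 1) *
          (Real.Gamma (b + n - 1) * Real.Gamma (b + ℓ + j - 1) /
            (Real.Gamma (b + ℓ + n - 1) * Real.Gamma (b + j - 1))))
    (n : ℕ) (hn : 2 ≤ n) :
    s * ψ n = Real.Gamma (a-2) * (Real.Gamma b / Real.Gamma (a+b-2))
      + ℓ * Real.Gamma (a-2) * (Real.Gamma (b+(n:ℝ)-1) / Real.Gamma (a+b+(n:ℝ)-2))
      - Real.Gamma (a-2) * (Real.Gamma (b+ℓ) / Real.Gamma (a+b+ℓ-2)) *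
          (Real.Gamma (a+b+ℓ+(n:ℝ)-2) * Real.Gamma (b+(n:ℝ)-1) /
            (Real.Gamma (a+b+(n:ℝ)-2) * Real.Gamma (b+ℓ+(n:ℝ)-1))) := by
  have ha : ∀ z : ℤ, a ≠ z := by
    intro z h
    have h0 : (0:ℝ) < z := by rw [← h]; exact ha0
    have h1 : (z:ℝ) < 1 := by rw [← h]; exact ha1
    have : (0:ℤ) < z := by exact_mod_cast h0
    have : z < 1 := by exact_mod_cast h1
    omega
  have hbl : 0 < b + ℓ := by linarith
  have hnr : (2:ℝ) ≤ (n:ℝ) := by exact_mod_cast hn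
  have hD : 0 < Real.Gamma (a+b+(n:ℝ)-2) := Real.Gamma_pos_of_pos (by linarith)
  have hE : 0 < Real.Gamma (b+ℓ+(n:ℝ)-1) := Real.Gamma_pos_of_pos (by linarith)
  -- step 1 : lam n
  have hlam' : lam n = (∑ k ∈ Finset.Icc 2 n, (n.choose k : ℝ) *
      (Real.Gamma (a + k - 2) * Real.Gamma (b + n - k))) / Real.Gamma (a+b+(n:ℝ)-2) := by
    rw [hlam, Finset.sum_div]
    refine Finset.sum_congr rfl (fun k _ => ?_)
    rw [hlamnk n k]
    ring
  -- step 2 : the j-sum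
  have hJ : ∑ j ∈ Finset.Icc 1 (n - 1),
      (n.choose (j - 1) : ℝ) * lamnk n (n - j + 1) *
        (Real.Gamma (b + n - 1) * Real.Gamma (b + ℓ + j - 1) /
          (Real.Gamma (b + ℓ + n - 1) * Real.Gamma (b + j - 1)))
      = Real.Gamma (b+(n:ℝ)-1) / (Real.Gamma (a+b+(n:ℝ)-2) * Real.Gamma (b+ℓ+(n:ℝ)-1)) *
        ∑ j ∈ Finset.Icc 1 (n-1), (n.choose (j-1) : ℝ) *
          (Real.Gamma (a + n - j - 1) * Real.Gamma (b + ℓ + j - 1)) := by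
    rw [Finset.mul_sum]
    refine Finset.sum_congr rfl (fun j hj => ?_)
    simp only [Finset.mem_Icc] at hj
    obtain ⟨hj1, hj2⟩ := hj
    have hjn : j ≤ n := by omega
    have hc1 : ((n - j + 1 : ℕ) : ℝ) = (n:ℝ) - j + 1 := by
      push_cast [hjn]
      ring
    rw [hlamnk n (n - j + 1)]
    rw [show a + ((n-j+1 : ℕ) : ℝ) - 2 = a + (n:ℝ) - j - 1 by rw [hc1]; ring,
      show b + (n:ℝ) - ((n-j+1 : ℕ) : ℝ) = b + (j:ℝ) - 1 by rw [hc1]; ring]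
    have hg1 : Real.Gamma (b + (j:ℝ) - 1) ≠ 0 := by
      have : (1:ℝ) ≤ (j:ℝ) := by exact_mod_cast hj1
      exact (Real.Gamma_pos_of_pos (by linarith)).ne'
    field_simp
  -- step 3: closed forms
  have hMb := sumIcc a b ha hb n hn
  have hMl := sumJ a (b+ℓ) ha hbl n hn
  have hQb := Qlem (a+b-2) (by linarith) (Real.Gamma b) n hn
  have hQl := Qlem (a+b+ℓ-2) (by linarith) (Real.Gamma (b+ℓ)) n hn
  rw [show a+b-2+(n:ℝ) = a+b+(n:ℝ)-2 by ring] at hQb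
  rw [show a+b+ℓ-2+(n:ℝ) = a+b+ℓ+(n:ℝ)-2 by ring] at hQl
  -- gamma recurrences
  have hbn1 : (0:ℝ) < b + (n:ℝ) - 1 := by linarith
  have hbln1 : (0:ℝ) < b + ℓ + (n:ℝ) - 1 := by linarith
  have hGbn : Real.Gamma (b + (n:ℝ)) = (b + (n:ℝ) - 1) * Real.Gamma (b + (n:ℝ) - 1) := by
    have h := Real.Gamma_add_one hbn1.ne'
    rwa [show b + (n:ℝ) - 1 + 1 = b + (n:ℝ) by ring] at h
  have hGbln : Real.Gamma (b + ℓ + (n:ℝ)) = (b + ℓ + (n:ℝ) - 1) * Real.Gamma (b + ℓ + (n:ℝ) - 1) := by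
    have h := Real.Gamma_add_one hbln1.ne'
    rwa [show b + ℓ + (n:ℝ) - 1 + 1 = b + ℓ + (n:ℝ) by ring] at h
  -- assemble
  simp only [show a + (b+ℓ) = a+b+ℓ by ring] at hMl
  rw [mul_assoc (Real.Gamma (a-2)) (Real.Gamma b)] at hMb
  rw [mul_assoc (Real.Gamma (a-2)) (Real.Gamma (b+ℓ))] at hMl
  rw [hQb] at hMb
  rw [hQl] at hMl
  set β := Real.Gamma b / Real.Gamma (a+b-2) with hβ
  set β' := Real.Gamma (b+ℓ) / Real.Gamma (a+b+ℓ-2) with hβ'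
  rw [hψ n hn, hlam', hJ, hMb, hMl, hGbn, hGbln]
  field_simp
  ring

lemma final (a b ℓ : ℝ) (ha0 : 0 < a) (ha1 : a < 1) (hb : 0 < b) (hℓ : -b < ℓ)
    (s : ℝ) (ψ : ℕ → ℝ)
    (hexact : ∀ n : ℕ, 2 ≤ n →
      s * ψ n = Real.Gamma (a-2) * (Real.Gamma b / Real.Gamma (a+b-2))
      + ℓ * Real.Gamma (a-2) * (Real.Gamma (b+(n:ℝ)-1) / Real.Gamma (a+b+(n:ℝ)-2))
      - Real.Gamma (a-2) * (Real.Gamma (b+ℓ) / Real.Gamma (a+b+ℓ-2)) *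
          (Real.Gamma (a+b+ℓ+(n:ℝ)-2) * Real.Gamma (b+(n:ℝ)-1) /
            (Real.Gamma (a+b+(n:ℝ)-2) * Real.Gamma (b+ℓ+(n:ℝ)-1)))) :
    (fun n : ℕ => s * ψ n -
        (Real.Gamma a * ℓ / ((2 - a) * (1 - a)) * (n : ℝ) ^ (1 - a) +
          Real.Gamma a / ((2 - a) * (a - 1)) *
            (Real.Gamma (b + ℓ) / Real.Gamma (a + b + ℓ - 2) -
              Real.Gamma b / Real.Gamma (a + b - 2))))
      =o[atTop] (fun n : ℕ => (n : ℝ) ^ (1 - a)) ∧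
    (fun n : ℕ => s * ψ n) ~[atTop]
      (fun n : ℕ => Real.Gamma a * ℓ / ((2 - a) * (1 - a)) * (n : ℝ) ^ (1 - a)) := by
  have hbl : 0 < b + ℓ := by linarith
  set A2 := Real.Gamma (a-2) with hA2
  set β := Real.Gamma b / Real.Gamma (a+b-2) with hβ
  set β' := Real.Gamma (b+ℓ) / Real.Gamma (a+b+ℓ-2) with hβ'
  -- Gamma a in terms of A2
  have ha2ne : a - 2 ≠ 0 := by intro h; linarith
  have ha1ne : a - 1 ≠ 0 := by intro h; linarith
  have hGa : Real.Gamma a = (a-1) * ((a-2) * A2) := by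
    have h1 : Real.Gamma (a-1) = (a-2) * A2 := by
      have := Real.Gamma_add_one ha2ne
      rwa [show a - 2 + 1 = a - 1 by ring] at this
    have h2 : Real.Gamma a = (a-1) * Real.Gamma (a-1) := by
      have := Real.Gamma_add_one ha1ne
      rwa [show a - 1 + 1 = a by ring] at this
    rw [h2, h1]
  have hA2ne : A2 ≠ 0 := by
    rw [hA2]
    apply Real.Gamma_ne_zero
    intro m h
    have : (0:ℝ) ≤ (m:ℝ) := Nat.cast_nonneg m
    match m with
    | 0 => simp at h; linarith
    | 1 => push_cast at h; linarith
    | (m+2) => push_cast at h; have : (0:ℝ) ≤ (m:ℝ) := Nat.cast_nonneg m; linarith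
  have hfac : (2 - a) * (1 - a) = (a-2) * (a-1) := by ring
  -- the statement's constants
  have hc : Real.Gamma a * ℓ / ((2 - a) * (1 - a)) = ℓ * A2 := by
    rw [hGa, hfac]
    field_simp
  have hLc : Real.Gamma a / ((2 - a) * (a - 1)) * (β' - β) = A2 * β - A2 * β' := by
    rw [hGa, show (2 - a) * (a-1) = -((a-2)*(a-1)) by ring]
    field_simp
    ring
  -- limits
  have hs0 : (0:ℝ) ≤ 1 - a := by linarith
  have hs1 : (1:ℝ) - a ≤ 1 := by linarith
  have hG : Tendsto (fun n : ℕ => Real.Gamma (b+(n:ℝ)-1) / Real.Gamma (a+b+(n:ℝ)-2) / (n:ℝ)^(1-a))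
      atTop (nhds 1) := by
    have h := Glim (1-a) (a+b-2) hs0 hs1
    apply h.congr
    intro n
    rw [show (n:ℝ) + (a+b-2) + (1-a) = b + (n:ℝ) - 1 by ring,
      show (n:ℝ) + (a+b-2) = a+b+(n:ℝ)-2 by ring]
  have hQ : Tendsto (fun n : ℕ => Real.Gamma (a+b+ℓ+(n:ℝ)-2) * Real.Gamma (b+(n:ℝ)-1) /
      (Real.Gamma (a+b+(n:ℝ)-2) * Real.Gamma (b+ℓ+(n:ℝ)-1))) atTop (nhds 1) := by
    have h := Qlim (1-a) (a+b-2) (a+b+ℓ-2) hs0 hs1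
    apply h.congr
    intro n
    rw [show (n:ℝ) + (a+b-2) + (1-a) = b + (n:ℝ) - 1 by ring,
      show (n:ℝ) + (a+b+ℓ-2) + (1-a) = b+ℓ+(n:ℝ)-1 by ring,
      show (n:ℝ) + (a+b+ℓ-2) = a+b+ℓ+(n:ℝ)-2 by ring,
      show (n:ℝ) + (a+b-2) = a+b+(n:ℝ)-2 by ring]
  -- notation for functions
  set G : ℕ → ℝ := fun n => Real.Gamma (b+(n:ℝ)-1) / Real.Gamma (a+b+(n:ℝ)-2) with hGdef
  set Q : ℕ → ℝ := fun n => Real.Gamma (a+b+ℓ+(n:ℝ)-2) * Real.Gamma (b+(n:ℝ)-1) /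
      (Real.Gamma (a+b+(n:ℝ)-2) * Real.Gamma (b+ℓ+(n:ℝ)-1)) with hQdef
  set g : ℕ → ℝ := fun n => (n:ℝ) ^ (1-a) with hgdef
  have hg_atTop : Tendsto g atTop atTop :=
    (tendsto_rpow_atTop (by linarith : (0:ℝ) < 1 - a)).comp tendsto_natCast_atTop_atTop
  -- term1
  have term1 : (fun n : ℕ => ℓ * A2 * G n - ℓ * A2 * g n) =o[atTop] g := by
    rw [isLittleO_iff_tendsto']
    · have h1 : Tendsto (fun n : ℕ => ℓ * A2 * (G n / g n) - ℓ * A2) atTop (nhds 0) := by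
        have := (hG.const_mul (ℓ * A2)).sub_const (ℓ * A2)
        rw [mul_one, sub_self] at this
        exact this
      apply h1.congr'
      filter_upwards [eventually_gt_atTop 0] with n hn
      have hgne : g n ≠ 0 := by
        rw [hgdef]
        have : (0:ℝ) < (n:ℝ) := by exact_mod_cast hn
        exact (Real.rpow_pos_of_pos this _).ne'
      field_simp
    · filter_upwards [eventually_gt_atTop 0] with n hn h
      exfalso
      rw [hgdef] at h
      have : (0:ℝ) < (n:ℝ) := by exact_mod_cast hn
      exact (Real.rpow_pos_of_pos this _).ne' h
  -- term2
  have term2 : (fun n : ℕ => A2 * β' - A2 * β' * Q n) =o[atTop] g := by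
    have h2 : Tendsto (fun n : ℕ => A2 * β' - A2 * β' * Q n) atTop (nhds 0) := by
      have := (hQ.const_mul (A2 * β')).const_sub (A2 * β')
      rwa [mul_one, sub_self] at this
    have h3 : (fun n : ℕ => A2 * β' - A2 * β' * Q n) =o[atTop] (fun _ : ℕ => (1:ℝ)) :=
      (isLittleO_one_iff ℝ).mpr h2
    exact h3.trans (Asymptotics.isLittleO_const_left.mpr
      (Or.inr (Filter.Tendsto.comp tendsto_norm_atTop_atTop hg_atTop)))
  have hsum := term1.add term2
  -- goal 1
  have goal1 : (fun n : ℕ => s * ψ n -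
      (Real.Gamma a * ℓ / ((2 - a) * (1 - a)) * (n : ℝ) ^ (1 - a) +
        Real.Gamma a / ((2 - a) * (a - 1)) * (β' - β))) =o[atTop] g := by
    apply Filter.EventuallyEq.trans_isLittleO ?_ hsum
    filter_upwards [eventually_ge_atTop 2] with n hn
    rw [hexact n hn, hc, hLc]
    simp only [hGdef, hQdef, hgdef]
    ring
  constructor
  · exact goal1
  · -- goal 2
    have hdiff : (fun n : ℕ => s * ψ n -
        Real.Gamma a * ℓ / ((2 - a) * (1 - a)) * (n : ℝ) ^ (1 - a)) =o[atTop] g := by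
      have hconst : (fun _ : ℕ => Real.Gamma a / ((2 - a) * (a - 1)) * (β' - β)) =o[atTop] g := by
        apply Asymptotics.isLittleO_const_left.mpr
        right
        exact Filter.Tendsto.comp tendsto_norm_atTop_atTop hg_atTop
      have := goal1.add hconst
      apply this.congr_left
      intro n
      ring
    rcases eq_or_ne ℓ 0 with h0 | hne
    · -- ℓ = 0 : ψ is eventually 0 and the main term is 0
      subst h0
      have hzero : ∀ n : ℕ, 2 ≤ n → s * ψ n = 0 := by
        intro n hn
        have hn2 : (2:ℝ) ≤ (n:ℝ) := by exact_mod_cast hn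
        rw [hexact n hn]
        have hβeq : β' = β := by rw [hβ', hβ]; norm_num
        have hq : Real.Gamma (a+b+0+(n:ℝ)-2) * Real.Gamma (b+(n:ℝ)-1) /
            (Real.Gamma (a+b+(n:ℝ)-2) * Real.Gamma (b+0+(n:ℝ)-1)) = 1 := by
          rw [show a+b+0+(n:ℝ)-2 = a+b+(n:ℝ)-2 by ring,
            show b+0+(n:ℝ)-1 = b+(n:ℝ)-1 by ring]
          have h3 : 0 < Real.Gamma (a+b+(n:ℝ)-2) := Real.Gamma_pos_of_pos (by linarith)
          have h4 : 0 < Real.Gamma (b+(n:ℝ)-1) := Real.Gamma_pos_of_pos (by linarith)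
          field_simp
        rw [hβeq, hq]
        ring
      rw [Asymptotics.IsEquivalent]
      have heq0 : (fun n : ℕ => s * ψ n -
          Real.Gamma a * 0 / ((2 - a) * (1 - a)) * (n : ℝ) ^ (1 - a))
          =ᶠ[atTop] (fun _ : ℕ => (0:ℝ)) := by
        filter_upwards [eventually_ge_atTop 2] with n hn
        rw [hzero n hn]
        ring
      exact heq0.trans_isLittleO (Asymptotics.isLittleO_zero _ _)
    · -- ℓ ≠ 0
      have hcne : Real.Gamma a * ℓ / ((2 - a) * (1 - a)) ≠ 0 := by
        rw [hc]
        exact mul_ne_zero hne hA2ne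
      rw [Asymptotics.IsEquivalent]
      refine hdiff.trans_isBigO ?_
      apply Asymptotics.isBigO_self_const_mul (c := Real.Gamma a * ℓ / ((2 - a) * (1 - a))) hcne ..


/- Asymptotic behavior of ψ_{a,b,ℓ} for a ∈ (0,1):
sgn(ℓ)ψ_{a,b,ℓ}(n) = (Γ(a)ℓ/((2-a)(1-a))) n^{1-a} + L_{a,b}(ℓ) + o(n^{1-a}). -/
theorem stmt18 (a b ℓ : ℝ) (ha0 : 0 < a) (ha1 : a < 1) (hb : 0 < b) (hℓ : -b < ℓ)
    (s : ℝ) (hs : s = if 0 ≤ ℓ then 1 else -1)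
    (lamnk : ℕ → ℕ → ℝ)
    (hlamnk : ∀ p k : ℕ, lamnk p k =
      Real.Gamma (a + k - 2) * Real.Gamma (b + p - k) / Real.Gamma (a + b + p - 2))
    (lam : ℕ → ℝ)
    (hlam : ∀ n : ℕ, lam n = ∑ k ∈ Finset.Icc 2 n, (n.choose k : ℝ) * lamnk n k)
    (ψ : ℕ → ℝ)
    (hψ : ∀ n : ℕ, 2 ≤ n → s * ψ n =
      lam n - ∑ j ∈ Finset.Icc 1 (n - 1),
        (n.choose (j - 1) : ℝ) * lamnk n (n - j + 1) *
          (Real.Gamma (b + n - 1) * Real.Gamma (b + ℓ + j - 1) /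
            (Real.Gamma (b + ℓ + n - 1) * Real.Gamma (b + j - 1)))) :
    (fun n : ℕ => s * ψ n -
        (Real.Gamma a * ℓ / ((2 - a) * (1 - a)) * (n : ℝ) ^ (1 - a) +
          Real.Gamma a / ((2 - a) * (a - 1)) *
            (Real.Gamma (b + ℓ) / Real.Gamma (a + b + ℓ - 2) -
              Real.Gamma b / Real.Gamma (a + b - 2))))
      =o[atTop] (fun n : ℕ => (n : ℝ) ^ (1 - a)) ∧
    (fun n : ℕ => s * ψ n) ~[atTop]
      (fun n : ℕ => Real.Gamma a * ℓ / ((2 - a) * (1 - a)) * (n : ℝ) ^ (1 - a)) := by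
  exact final a b ℓ ha0 ha1 hb hℓ s ψ
    (fun n hn => exact_formula a b ℓ ha0 ha1 hb hℓ s lamnk hlamnk lam hlam ψ hψ n hn)
end
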